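/- arXiv:1504.03271 — 2 statements merged into one kernel-verified Lean document; each statement's English description precedes it below -/
import Mathlib

section
/- Let M = U × V carry the product metric g (warping function f ≡ 1), and suppose g is super generalized recurrent (SGK_n) with associated 1-forms (Π, Φ, Ψ, Θ). Then: (i) both ḡ and g̃ are super generalized recurrent (each satisfies the SGK identity with suitable associated 1-forms); (ii) at every point where the fiber part of Π is nonzero (Π_ε ≠ 0 for some ε), ḡ is of Roter type RT_p with (R̄; ḡ, S̄), i.e. R̄ = N₁ ḡ∧ḡ − N₂ ḡ∧S̄ − N₃ S̄∧S̄ there for some reals N₁,N₂,N₃; (iii) at every point where the base part of Π is nonzero (Π_e ≠ 0 for some e), g̃ is of Roter type RT_{n−p} with (R̃; g̃, S̃); (iv) at every point where 2κ̃Φ_ε + (n−p)Ψ_ε ≠ 0 for some ε, the base satisfies the Einstein metric condition S̄_{ab} = λ ḡ_{ab} for some real λ; (v) at every point where 2κ̄Φ_e + pΨ_e ≠ 0 for some e, the fiber satisfies the Einstein metric condition S̃_{αβ} = μ g̃_{αβ} for some real μ. -/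
noncomputable section

/-- Partial derivative of a scalar function along the `j`-th coordinate direction. -/
def pd {k : ℕ} (F : (Fin k → ℝ) → ℝ) (j : Fin k) (x : Fin k → ℝ) : ℝ :=
  fderiv ℝ F x (Pi.single j 1)

/-- Christoffel symbols `Γ^i_{jl}` of a metric `h` with (pointwise) inverse `hinv`. -/
def Christoffel {k : ℕ} (h hinv : (Fin k → ℝ) → Fin k → Fin k → ℝ)
    (i j l : Fin k) (x : Fin k → ℝ) : ℝ :=
  (1 / 2) * ∑ r, hinv x i r *
    (pd (fun y => h y r l) j x + pd (fun y => h y j r) l x - pd (fun y => h y j l) r x)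

/-- The (0,4) Riemann-Christoffel curvature tensor of `h`. -/
def Riem {k : ℕ} (h hinv : (Fin k → ℝ) → Fin k → Fin k → ℝ)
    (x : Fin k → ℝ) (i j s l : Fin k) : ℝ :=
  ∑ r, h x i r *
    (pd (Christoffel h hinv r l j) s x - pd (Christoffel h hinv r s j) l x
      + (∑ t, Christoffel h hinv r s t x * Christoffel h hinv t l j x)
      - ∑ t, Christoffel h hinv r l t x * Christoffel h hinv t s j x)

/-- The Ricci tensor of `h`. -/
def Ric {k : ℕ} (h hinv : (Fin k → ℝ) → Fin k → Fin k → ℝ)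
    (x : Fin k → ℝ) (j l : Fin k) : ℝ :=
  ∑ i, ∑ s, hinv x i s * Riem h hinv x i j s l

/-- The scalar curvature of `h`. -/
def Scal {k : ℕ} (h hinv : (Fin k → ℝ) → Fin k → Fin k → ℝ) (x : Fin k → ℝ) : ℝ :=
  ∑ j, ∑ l, hinv x j l * Ric h hinv x j l

/-- Covariant derivative (w.r.t. the Levi-Civita connection of `h`) of a (0,4) tensor field. -/
def cov4 {k : ℕ} (h hinv : (Fin k → ℝ) → Fin k → Fin k → ℝ)
    (T : (Fin k → ℝ) → Fin k → Fin k → Fin k → Fin k → ℝ)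
    (x : Fin k → ℝ) (i j s l m : Fin k) : ℝ :=
  pd (fun y => T y i j s l) m x
    - (∑ r, Christoffel h hinv r m i x * T x r j s l)
    - (∑ r, Christoffel h hinv r m j x * T x i r s l)
    - (∑ r, Christoffel h hinv r m s x * T x i j r l)
    - ∑ r, Christoffel h hinv r m l x * T x i j s r

/-- Covariant derivative of a (0,2) tensor field. -/
def cov2 {k : ℕ} (h hinv : (Fin k → ℝ) → Fin k → Fin k → ℝ)
    (T : (Fin k → ℝ) → Fin k → Fin k → ℝ) (x : Fin k → ℝ) (i j m : Fin k) : ℝ :=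
  pd (fun y => T y i j) m x
    - (∑ r, Christoffel h hinv r m i x * T x r j)
    - ∑ r, Christoffel h hinv r m j x * T x i r

/-- Kulkarni-Nomizu product of two (0,2) tensors. -/
def KN {k : ℕ} (A E : (Fin k → ℝ) → Fin k → Fin k → ℝ)
    (x : Fin k → ℝ) (i j s l : Fin k) : ℝ :=
  A x i l * E x j s + A x j s * E x i l - A x i s * E x j l - A x j l * E x i s

/-- The Gaussian curvature tensor `G_{ijsl} = h_{il}h_{js} - h_{is}h_{jl}`. -/
def Gt {k : ℕ} (h : (Fin k → ℝ) → Fin k → Fin k → ℝ)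
    (x : Fin k → ℝ) (i j s l : Fin k) : ℝ :=
  h x i l * h x j s - h x i s * h x j l

/-- The conformal (Weyl) curvature tensor of a `k`-dimensional metric `h`. -/
def Weyl {k : ℕ} (h hinv : (Fin k → ℝ) → Fin k → Fin k → ℝ)
    (x : Fin k → ℝ) (i j s l : Fin k) : ℝ :=
  Riem h hinv x i j s l - (1 / ((k : ℝ) - 2)) * KN h (Ric h hinv) x i j s l
    + (Scal h hinv x / (2 * ((k : ℝ) - 1) * ((k : ℝ) - 2))) * KN h h x i j s l

/-- Recurrency condition at a point. -/
def Recur {k : ℕ} (h hinv : (Fin k → ℝ) → Fin k → Fin k → ℝ)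
    (piF : (Fin k → ℝ) → Fin k → ℝ) (x : Fin k → ℝ) : Prop :=
  ∀ i j s l m, cov4 h hinv (Riem h hinv) x i j s l m = piF x m * Riem h hinv x i j s l

/-- Hyper generalized recurrency condition at a point. -/
def HGK {k : ℕ} (h hinv : (Fin k → ℝ) → Fin k → Fin k → ℝ)
    (piF psiF : (Fin k → ℝ) → Fin k → ℝ) (x : Fin k → ℝ) : Prop :=
  ∀ i j s l m, cov4 h hinv (Riem h hinv) x i j s l m =
    piF x m * Riem h hinv x i j s l + psiF x m * KN h (Ric h hinv) x i j s l

/-- Weakly generalized recurrency condition at a point. -/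
def WGK {k : ℕ} (h hinv : (Fin k → ℝ) → Fin k → Fin k → ℝ)
    (piF phiF : (Fin k → ℝ) → Fin k → ℝ) (x : Fin k → ℝ) : Prop :=
  ∀ i j s l m, cov4 h hinv (Riem h hinv) x i j s l m =
    piF x m * Riem h hinv x i j s l
      + phiF x m * KN (Ric h hinv) (Ric h hinv) x i j s l

/-- Super generalized recurrency condition at a point. -/
def SGK {k : ℕ} (h hinv : (Fin k → ℝ) → Fin k → Fin k → ℝ)
    (piF phiF psiF thetaF : (Fin k → ℝ) → Fin k → ℝ) (x : Fin k → ℝ) : Prop :=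
  ∀ i j s l m, cov4 h hinv (Riem h hinv) x i j s l m =
    piF x m * Riem h hinv x i j s l
      + phiF x m * KN (Ric h hinv) (Ric h hinv) x i j s l
      + psiF x m * KN h (Ric h hinv) x i j s l
      + thetaF x m * KN h h x i j s l

/-- Base-point projection of a point of `M = U × V`. -/
def bpt {p q : ℕ} (z : Fin (p + q) → ℝ) : Fin p → ℝ := fun a => z (Fin.castAdd q a)

/-- Fiber-point projection of a point of `M = U × V`. -/
def fpt {p q : ℕ} (z : Fin (p + q) → ℝ) : Fin q → ℝ := fun a => z (Fin.natAdd p a)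

/-- Block-diagonal combination of a base tensor `A` and a fiber tensor `B` scaled by `c`. -/
def wPair {p q : ℕ} (A : (Fin p → ℝ) → Fin p → Fin p → ℝ)
    (B : (Fin q → ℝ) → Fin q → Fin q → ℝ) (c : (Fin p → ℝ) → ℝ)
    (z : Fin (p + q) → ℝ) (i j : Fin (p + q)) : ℝ :=
  Sum.elim
    (fun a => Sum.elim (fun b => A (bpt z) a b) (fun _ => (0 : ℝ)) (finSumFinEquiv.symm j))
    (fun a => Sum.elim (fun _ => (0 : ℝ)) (fun b => c (bpt z) * B (fpt z) a b)
      (finSumFinEquiv.symm j))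
    (finSumFinEquiv.symm i)

/-- The warped product metric `g = ḡ ⊕ f g̃`. -/
def wMet {p q : ℕ} (gbar : (Fin p → ℝ) → Fin p → Fin p → ℝ)
    (gtil : (Fin q → ℝ) → Fin q → Fin q → ℝ) (f : (Fin p → ℝ) → ℝ) :
    (Fin (p + q) → ℝ) → Fin (p + q) → Fin (p + q) → ℝ :=
  wPair gbar gtil f

/-- The inverse of the warped product metric. -/
def wMetInv {p q : ℕ} (gbinv : (Fin p → ℝ) → Fin p → Fin p → ℝ)
    (gtinv : (Fin q → ℝ) → Fin q → Fin q → ℝ) (f : (Fin p → ℝ) → ℝ) :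
    (Fin (p + q) → ℝ) → Fin (p + q) → Fin (p + q) → ℝ :=
  wPair gbinv gtinv fun x => (f x)⁻¹

/-- The set of points of `M = U × V` inside `ℝ^{p+q}`. -/
def Mset {p q : ℕ} (U : Set (Fin p → ℝ)) (V : Set (Fin q → ℝ)) : Set (Fin (p + q) → ℝ) :=
  {z | bpt z ∈ U ∧ fpt z ∈ V}

/-- The tensor `T_{ab} = -(1/(2f))(f_{a,b} - (1/(2f)) f_a f_b)`. -/
def Tten {p : ℕ} (gbar gbinv : (Fin p → ℝ) → Fin p → Fin p → ℝ) (f : (Fin p → ℝ) → ℝ)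
    (x : Fin p → ℝ) (a b : Fin p) : ℝ :=
  -(1 / (2 * f x)) *
    ((pd (fun y => pd f a y) b x - ∑ c, Christoffel gbar gbinv c b a x * pd f c x)
      - (1 / (2 * f x)) * pd f a x * pd f b x)

/-- `tr T = ḡ^{ab} T_{ab}`. -/
def trT {p : ℕ} (gbar gbinv : (Fin p → ℝ) → Fin p → Fin p → ℝ) (f : (Fin p → ℝ) → ℝ)
    (x : Fin p → ℝ) : ℝ :=
  ∑ a, ∑ b, gbinv x a b * Tten gbar gbinv f x a b

/-- `P = (1/(4f²)) ḡ^{ab} f_a f_b`. -/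
def Pw {p : ℕ} (gbinv : (Fin p → ℝ) → Fin p → Fin p → ℝ) (f : (Fin p → ℝ) → ℝ)
    (x : Fin p → ℝ) : ℝ :=
  (1 / (4 * f x ^ 2)) * ∑ a, ∑ b, gbinv x a b * pd f a x * pd f b x

/-- `Q = f((n-p-1)P - tr T)`, with `n - p = q`. -/
def Qw {p : ℕ} (q : ℕ) (gbar gbinv : (Fin p → ℝ) → Fin p → Fin p → ℝ)
    (f : (Fin p → ℝ) → ℝ) (x : Fin p → ℝ) : ℝ :=
  f x * (((q : ℝ) - 1) * Pw gbinv f x - trT gbar gbinv f x)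

/-!
The product metric `g = ḡ ⊕ g̃` is block diagonal, so every Christoffel symbol whose indices
meet both factors vanishes and the others are those of `ḡ` or `g̃` at the projected point, while a
function of the base point has zero derivative in fibre directions. Hence `R`, `S` and `∇R` of `g`
are block diagonal with blocks coming from `ḡ` and `g̃`; in particular all components of `R` and
`∇R` of index type `(a, β, γ, b)` vanish.

Reading the SGK identity of `g` at four base indices and a base direction gives the SGK identity
of `ḡ`. In a fibre direction `ε` its left side vanishes, leaving
`0 = Π_ε R̄ + Φ_ε S̄∧S̄ + Ψ_ε ḡ∧S̄ + Θ_ε ḡ∧ḡ`, a Roter-type relation once `Π_ε ≠ 0`. At index type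
`(a, β, γ, b)` only the Kulkarni–Nomizu terms survive:
`0 = 2Φ S̄_ab S̃_βγ + Ψ (ḡ_ab S̃_βγ + S̄_ab g̃_βγ) + 2Θ ḡ_ab g̃_βγ`, and contracting with `g̃^{βγ}`
gives `(2κ̃Φ + (n-p)Ψ) S̄_ab = -(κ̃Ψ + 2(n-p)Θ) ḡ_ab`. The fibre statements are symmetric.
-/

section Projection

/-- No differentiability hypothesis is needed: if `G` is not differentiable at `L z`, then neither
is `G ∘ L` at `z = s (L z)`, because `G = (G ∘ L) ∘ s`, so both sides are the junk value `0`. -/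
theorem fderiv_comp_clm_of_rightInverse {E F H : Type*} [NormedAddCommGroup E]
    [NormedSpace ℝ E] [NormedAddCommGroup F] [NormedSpace ℝ F] [NormedAddCommGroup H]
    [NormedSpace ℝ H] (L : E →L[ℝ] F) {s : F → E} {z : E} (hLs : ∀ y, L (s y) = y)
    (hsz : s (L z) = z) (hs : DifferentiableAt ℝ s (L z)) (G : F → H) :
    fderiv ℝ (fun y => G (L y)) z = (fderiv ℝ G (L z)).comp L := by
  by_cases hG : DifferentiableAt ℝ G (L z)
  · exact (fderiv_comp z hG L.differentiableAt).trans (by rw [L.fderiv])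
  · have hGL : ¬ DifferentiableAt ℝ (fun y => G (L y)) z := fun h => hG <| by
      have h' := (hsz.symm ▸ h : DifferentiableAt ℝ (fun y => G (L y)) (s (L z))).comp (L z) hs
      simpa [Function.comp_def, hLs] using h'
    rw [fderiv_zero_of_not_differentiableAt hG, fderiv_zero_of_not_differentiableAt hGL,
      ContinuousLinearMap.zero_comp]

variable {p q : ℕ}

def bptL (p q : ℕ) : (Fin (p + q) → ℝ) →L[ℝ] Fin p → ℝ :=
  ContinuousLinearMap.pi fun a => ContinuousLinearMap.proj (Fin.castAdd q a)

def fptL (p q : ℕ) : (Fin (p + q) → ℝ) →L[ℝ] Fin q → ℝ :=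
  ContinuousLinearMap.pi fun α => ContinuousLinearMap.proj (Fin.natAdd p α)

theorem differentiable_append_left (w : Fin q → ℝ) :
    Differentiable ℝ fun y : Fin p → ℝ => Fin.append y w := by
  refine differentiable_pi.2 fun i => ?_
  induction i using Fin.addCases with
  | left a => simpa using differentiable_apply a
  | right α => simp

theorem differentiable_append_right (y : Fin p → ℝ) :
    Differentiable ℝ fun w : Fin q → ℝ => Fin.append y w := by
  refine differentiable_pi.2 fun i => ?_
  induction i using Fin.addCases with
  | left a => simp
  | right α => simpa using differentiable_apply α

theorem pd_comp_bpt (G : (Fin p → ℝ) → ℝ) (j : Fin (p + q)) (z : Fin (p + q) → ℝ) :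
    pd (fun y => G (bpt y)) j z = fderiv ℝ G (bpt z) (bpt (Pi.single j 1)) :=
  congrArg (· (Pi.single j 1)) <|
    fderiv_comp_clm_of_rightInverse (bptL p q) (s := fun y => Fin.append y (fpt z))
      (fun y => funext fun a => Fin.append_left y _ a) Fin.append_castAdd_natAdd
      (differentiable_append_left _ _) G

theorem pd_comp_fpt (G : (Fin q → ℝ) → ℝ) (j : Fin (p + q)) (z : Fin (p + q) → ℝ) :
    pd (fun y => G (fpt y)) j z = fderiv ℝ G (fpt z) (fpt (Pi.single j 1)) :=
  congrArg (· (Pi.single j 1)) <|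
    fderiv_comp_clm_of_rightInverse (fptL p q) (s := fun w => Fin.append (bpt z) w)
      (fun w => funext fun α => Fin.append_right _ w α) Fin.append_castAdd_natAdd
      (differentiable_append_right _ _) G

theorem bpt_single_castAdd (a : Fin p) :
    bpt (Pi.single (Fin.castAdd q a) (1 : ℝ)) = Pi.single a 1 := by
  funext b; simp [bpt, Pi.single_apply]

theorem bpt_single_natAdd (α : Fin q) : bpt (Pi.single (Fin.natAdd p α) (1 : ℝ)) = 0 := by
  funext b; simp [bpt, Pi.single_apply, Fin.ext_iff]; omega

theorem fpt_single_natAdd (α : Fin q) :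
    fpt (Pi.single (Fin.natAdd p α) (1 : ℝ)) = Pi.single α 1 := by
  funext b; simp [fpt, Pi.single_apply]

theorem fpt_single_castAdd (a : Fin p) : fpt (Pi.single (Fin.castAdd q a) (1 : ℝ)) = 0 := by
  funext b; simp [fpt, Pi.single_apply, Fin.ext_iff]; omega

theorem pd_comp_bpt_castAdd (G : (Fin p → ℝ) → ℝ) (a : Fin p) (z : Fin (p + q) → ℝ) :
    pd (fun y => G (bpt y)) (Fin.castAdd q a) z = pd G a (bpt z) := by
  rw [pd_comp_bpt, bpt_single_castAdd]; rfl

theorem pd_comp_bpt_natAdd (G : (Fin p → ℝ) → ℝ) (α : Fin q) (z : Fin (p + q) → ℝ) :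
    pd (fun y => G (bpt y)) (Fin.natAdd p α) z = 0 := by
  rw [pd_comp_bpt, bpt_single_natAdd, map_zero]

theorem pd_comp_fpt_natAdd (G : (Fin q → ℝ) → ℝ) (α : Fin q) (z : Fin (p + q) → ℝ) :
    pd (fun y => G (fpt y)) (Fin.natAdd p α) z = pd G α (fpt z) := by
  rw [pd_comp_fpt, fpt_single_natAdd]; rfl

theorem pd_comp_fpt_castAdd (G : (Fin q → ℝ) → ℝ) (a : Fin p) (z : Fin (p + q) → ℝ) :
    pd (fun y => G (fpt y)) (Fin.castAdd q a) z = 0 := by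
  rw [pd_comp_fpt, fpt_single_castAdd, map_zero]

@[simp] theorem pd_const {k : ℕ} (c : ℝ) (j : Fin k) (x : Fin k → ℝ) :
    pd (fun _ => c) j x = 0 := by
  simp [pd]

end Projection

def prodTensor {p q : ℕ} (A : (Fin p → ℝ) → Fin p → Fin p → ℝ)
    (B : (Fin q → ℝ) → Fin q → Fin q → ℝ) : (Fin (p + q) → ℝ) → Fin (p + q) → Fin (p + q) → ℝ :=
  wPair A B fun _ => 1

theorem wMet_one {p q : ℕ} (A : (Fin p → ℝ) → Fin p → Fin p → ℝ)
    (B : (Fin q → ℝ) → Fin q → Fin q → ℝ) : wMet A B (fun _ => 1) = prodTensor A B :=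
  rfl

theorem wMetInv_one {p q : ℕ} (A : (Fin p → ℝ) → Fin p → Fin p → ℝ)
    (B : (Fin q → ℝ) → Fin q → Fin q → ℝ) : wMetInv A B (fun _ => 1) = prodTensor A B := by
  simp [wMetInv, prodTensor]

namespace prodTensor

variable {p q : ℕ} (A Ai : (Fin p → ℝ) → Fin p → Fin p → ℝ)
  (B Bi : (Fin q → ℝ) → Fin q → Fin q → ℝ) (z : Fin (p + q) → ℝ)

@[simp] theorem apply_castAdd_castAdd (a b : Fin p) :
    prodTensor A B z (Fin.castAdd q a) (Fin.castAdd q b) = A (bpt z) a b := by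
  simp [prodTensor, wPair]

@[simp] theorem apply_natAdd_natAdd (α β : Fin q) :
    prodTensor A B z (Fin.natAdd p α) (Fin.natAdd p β) = B (fpt z) α β := by
  simp [prodTensor, wPair]

@[simp] theorem apply_castAdd_natAdd (a : Fin p) (β : Fin q) :
    prodTensor A B z (Fin.castAdd q a) (Fin.natAdd p β) = 0 := by
  simp [prodTensor, wPair]

@[simp] theorem apply_natAdd_castAdd (α : Fin q) (b : Fin p) :
    prodTensor A B z (Fin.natAdd p α) (Fin.castAdd q b) = 0 := by
  simp [prodTensor, wPair]

theorem pd_castAdd_castAdd_castAdd (a b c : Fin p) :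
    pd (fun y => prodTensor A B y (Fin.castAdd q a) (Fin.castAdd q b)) (Fin.castAdd q c) z =
      pd (fun x => A x a b) c (bpt z) := by
  simp only [apply_castAdd_castAdd]
  exact pd_comp_bpt_castAdd (fun x => A x a b) c z

theorem pd_castAdd_castAdd_natAdd (a b : Fin p) (γ : Fin q) :
    pd (fun y => prodTensor A B y (Fin.castAdd q a) (Fin.castAdd q b)) (Fin.natAdd p γ) z = 0 := by
  simp only [apply_castAdd_castAdd]
  exact pd_comp_bpt_natAdd (fun x => A x a b) γ z

theorem pd_natAdd_natAdd_natAdd (α β γ : Fin q) :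
    pd (fun y => prodTensor A B y (Fin.natAdd p α) (Fin.natAdd p β)) (Fin.natAdd p γ) z =
      pd (fun x => B x α β) γ (fpt z) := by
  simp only [apply_natAdd_natAdd]
  exact pd_comp_fpt_natAdd (fun x => B x α β) γ z

theorem pd_natAdd_natAdd_castAdd (α β : Fin q) (c : Fin p) :
    pd (fun y => prodTensor A B y (Fin.natAdd p α) (Fin.natAdd p β)) (Fin.castAdd q c) z = 0 := by
  simp only [apply_natAdd_natAdd]
  exact pd_comp_fpt_castAdd (fun x => B x α β) c z

theorem kn_castAdd (C : (Fin p → ℝ) → Fin p → Fin p → ℝ) (D : (Fin q → ℝ) → Fin q → Fin q → ℝ)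
    (a b c d : Fin p) :
    KN (prodTensor A B) (prodTensor C D) z
        (Fin.castAdd q a) (Fin.castAdd q b) (Fin.castAdd q c) (Fin.castAdd q d) =
      KN A C (bpt z) a b c d := by
  simp [KN]

theorem kn_natAdd (C : (Fin p → ℝ) → Fin p → Fin p → ℝ) (D : (Fin q → ℝ) → Fin q → Fin q → ℝ)
    (α β γ δ : Fin q) :
    KN (prodTensor A B) (prodTensor C D) z
        (Fin.natAdd p α) (Fin.natAdd p β) (Fin.natAdd p γ) (Fin.natAdd p δ) =
      KN B D (fpt z) α β γ δ := by
  simp [KN]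

theorem kn_castAdd_natAdd_natAdd_castAdd (C : (Fin p → ℝ) → Fin p → Fin p → ℝ)
    (D : (Fin q → ℝ) → Fin q → Fin q → ℝ) (a : Fin p) (β γ : Fin q) (b : Fin p) :
    KN (prodTensor A B) (prodTensor C D) z
        (Fin.castAdd q a) (Fin.natAdd p β) (Fin.natAdd p γ) (Fin.castAdd q b) =
      A (bpt z) a b * D (fpt z) β γ + C (bpt z) a b * B (fpt z) β γ := by
  simp [KN, mul_comm]

local notation "g" => prodTensor A B
local notation "gi" => prodTensor Ai Bi

theorem christoffel_castAdd_castAdd_castAdd (a b c : Fin p) :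
    Christoffel g gi (Fin.castAdd q a) (Fin.castAdd q b) (Fin.castAdd q c) =
      fun y => Christoffel A Ai a b c (bpt y) := by
  funext y
  simp only [Christoffel, Fin.sum_univ_add, pd_castAdd_castAdd_castAdd]
  simp

theorem christoffel_natAdd_natAdd_natAdd (α β γ : Fin q) :
    Christoffel g gi (Fin.natAdd p α) (Fin.natAdd p β) (Fin.natAdd p γ) =
      fun y => Christoffel B Bi α β γ (fpt y) := by
  funext y
  simp only [Christoffel, Fin.sum_univ_add, pd_natAdd_natAdd_natAdd]
  simp

theorem christoffel_castAdd_castAdd_natAdd (a b : Fin p) (γ : Fin q) :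
    Christoffel g gi (Fin.castAdd q a) (Fin.castAdd q b) (Fin.natAdd p γ) = fun _ => 0 := by
  funext y
  simp only [Christoffel, Fin.sum_univ_add, pd_castAdd_castAdd_natAdd]
  simp

theorem christoffel_castAdd_natAdd_castAdd (a : Fin p) (β : Fin q) (c : Fin p) :
    Christoffel g gi (Fin.castAdd q a) (Fin.natAdd p β) (Fin.castAdd q c) = fun _ => 0 := by
  funext y
  simp only [Christoffel, Fin.sum_univ_add, pd_castAdd_castAdd_natAdd]
  simp

theorem christoffel_castAdd_natAdd_natAdd (a : Fin p) (β γ : Fin q) :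
    Christoffel g gi (Fin.castAdd q a) (Fin.natAdd p β) (Fin.natAdd p γ) = fun _ => 0 := by
  funext y
  simp only [Christoffel, Fin.sum_univ_add, pd_natAdd_natAdd_castAdd]
  simp

theorem christoffel_natAdd_castAdd_castAdd (α : Fin q) (b c : Fin p) :
    Christoffel g gi (Fin.natAdd p α) (Fin.castAdd q b) (Fin.castAdd q c) = fun _ => 0 := by
  funext y
  simp only [Christoffel, Fin.sum_univ_add, pd_castAdd_castAdd_natAdd]
  simp

theorem christoffel_natAdd_castAdd_natAdd (α : Fin q) (b : Fin p) (γ : Fin q) :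
    Christoffel g gi (Fin.natAdd p α) (Fin.castAdd q b) (Fin.natAdd p γ) = fun _ => 0 := by
  funext y
  simp only [Christoffel, Fin.sum_univ_add, pd_natAdd_natAdd_castAdd]
  simp

theorem christoffel_natAdd_natAdd_castAdd (α β : Fin q) (c : Fin p) :
    Christoffel g gi (Fin.natAdd p α) (Fin.natAdd p β) (Fin.castAdd q c) = fun _ => 0 := by
  funext y
  simp only [Christoffel, Fin.sum_univ_add, pd_natAdd_natAdd_castAdd]
  simp

attribute [local simp] christoffel_castAdd_castAdd_castAdd christoffel_natAdd_natAdd_natAdd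
  christoffel_castAdd_castAdd_natAdd christoffel_castAdd_natAdd_castAdd
  christoffel_castAdd_natAdd_natAdd christoffel_natAdd_castAdd_castAdd
  christoffel_natAdd_castAdd_natAdd christoffel_natAdd_natAdd_castAdd
  pd_comp_bpt_castAdd pd_comp_bpt_natAdd pd_comp_fpt_natAdd pd_comp_fpt_castAdd

theorem riem_castAdd (a b c d : Fin p) :
    Riem g gi z (Fin.castAdd q a) (Fin.castAdd q b) (Fin.castAdd q c) (Fin.castAdd q d) =
      Riem A Ai (bpt z) a b c d := by
  simp [Riem, Fin.sum_univ_add]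

theorem riem_natAdd (α β γ δ : Fin q) :
    Riem g gi z (Fin.natAdd p α) (Fin.natAdd p β) (Fin.natAdd p γ) (Fin.natAdd p δ) =
      Riem B Bi (fpt z) α β γ δ := by
  simp [Riem, Fin.sum_univ_add]

theorem riem_castAdd_natAdd_natAdd_castAdd (a : Fin p) (β γ : Fin q) (b : Fin p) :
    Riem g gi z (Fin.castAdd q a) (Fin.natAdd p β) (Fin.natAdd p γ) (Fin.castAdd q b) = 0 := by
  simp [Riem, Fin.sum_univ_add]

theorem riem_castAdd_natAdd_castAdd_natAdd (a : Fin p) (β : Fin q) (c : Fin p) (δ : Fin q) :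
    Riem g gi z (Fin.castAdd q a) (Fin.natAdd p β) (Fin.castAdd q c) (Fin.natAdd p δ) = 0 := by
  simp [Riem, Fin.sum_univ_add]

theorem riem_natAdd_castAdd_natAdd_castAdd (α : Fin q) (b : Fin p) (γ : Fin q) (d : Fin p) :
    Riem g gi z (Fin.natAdd p α) (Fin.castAdd q b) (Fin.natAdd p γ) (Fin.castAdd q d) = 0 := by
  simp [Riem, Fin.sum_univ_add]

theorem riem_castAdd_castAdd_castAdd_natAdd (a b c : Fin p) (δ : Fin q) :
    Riem g gi z (Fin.castAdd q a) (Fin.castAdd q b) (Fin.castAdd q c) (Fin.natAdd p δ) = 0 := by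
  simp [Riem, Fin.sum_univ_add]

theorem riem_castAdd_natAdd_castAdd_castAdd (a : Fin p) (β : Fin q) (c d : Fin p) :
    Riem g gi z (Fin.castAdd q a) (Fin.natAdd p β) (Fin.castAdd q c) (Fin.castAdd q d) = 0 := by
  simp [Riem, Fin.sum_univ_add]

theorem riem_natAdd_castAdd_natAdd_natAdd (α : Fin q) (b : Fin p) (γ δ : Fin q) :
    Riem g gi z (Fin.natAdd p α) (Fin.castAdd q b) (Fin.natAdd p γ) (Fin.natAdd p δ) = 0 := by
  simp [Riem, Fin.sum_univ_add]

theorem riem_natAdd_natAdd_natAdd_castAdd (α β γ : Fin q) (d : Fin p) :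
    Riem g gi z (Fin.natAdd p α) (Fin.natAdd p β) (Fin.natAdd p γ) (Fin.castAdd q d) = 0 := by
  simp [Riem, Fin.sum_univ_add]

attribute [local simp] riem_castAdd riem_natAdd riem_castAdd_natAdd_natAdd_castAdd
  riem_castAdd_natAdd_castAdd_natAdd riem_natAdd_castAdd_natAdd_castAdd
  riem_castAdd_castAdd_castAdd_natAdd riem_castAdd_natAdd_castAdd_castAdd
  riem_natAdd_castAdd_natAdd_natAdd riem_natAdd_natAdd_natAdd_castAdd

theorem ric : Ric g gi = prodTensor (Ric A Ai) (Ric B Bi) := by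
  funext y i j
  induction i using Fin.addCases <;> induction j using Fin.addCases <;>
    simp [Ric, Fin.sum_univ_add]

theorem cov4_castAdd (a b c d e : Fin p) :
    cov4 g gi (Riem g gi) z (Fin.castAdd q a) (Fin.castAdd q b) (Fin.castAdd q c)
      (Fin.castAdd q d) (Fin.castAdd q e) = cov4 A Ai (Riem A Ai) (bpt z) a b c d e := by
  simp [cov4, Fin.sum_univ_add, pd_comp_bpt_castAdd (fun x => Riem A Ai x a b c d)]

theorem cov4_castAdd_dir_natAdd (a b c d : Fin p) (ε : Fin q) :
    cov4 g gi (Riem g gi) z (Fin.castAdd q a) (Fin.castAdd q b) (Fin.castAdd q c)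
      (Fin.castAdd q d) (Fin.natAdd p ε) = 0 := by
  simp [cov4, Fin.sum_univ_add, pd_comp_bpt_natAdd (fun x => Riem A Ai x a b c d)]

theorem cov4_natAdd (α β γ δ ε : Fin q) :
    cov4 g gi (Riem g gi) z (Fin.natAdd p α) (Fin.natAdd p β) (Fin.natAdd p γ)
      (Fin.natAdd p δ) (Fin.natAdd p ε) = cov4 B Bi (Riem B Bi) (fpt z) α β γ δ ε := by
  simp [cov4, Fin.sum_univ_add, pd_comp_fpt_natAdd (fun x => Riem B Bi x α β γ δ)]

theorem cov4_natAdd_dir_castAdd (α β γ δ : Fin q) (e : Fin p) :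
    cov4 g gi (Riem g gi) z (Fin.natAdd p α) (Fin.natAdd p β) (Fin.natAdd p γ)
      (Fin.natAdd p δ) (Fin.castAdd q e) = 0 := by
  simp [cov4, Fin.sum_univ_add, pd_comp_fpt_castAdd (fun x => Riem B Bi x α β γ δ)]

theorem cov4_castAdd_natAdd_natAdd_castAdd (a : Fin p) (β γ : Fin q) (b : Fin p)
    (m : Fin (p + q)) :
    cov4 g gi (Riem g gi) z (Fin.castAdd q a) (Fin.natAdd p β) (Fin.natAdd p γ)
      (Fin.castAdd q b) m = 0 := by
  induction m using Fin.addCases <;> simp [cov4, Fin.sum_univ_add]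

variable {A Ai B Bi z} {π φ ψ θ : (Fin (p + q) → ℝ) → Fin (p + q) → ℝ}

theorem sgk_castAdd (h : SGK (prodTensor A B) (prodTensor Ai Bi) π φ ψ θ z)
    (a b c d e : Fin p) :
    cov4 A Ai (Riem A Ai) (bpt z) a b c d e =
      π z (Fin.castAdd q e) * Riem A Ai (bpt z) a b c d
        + φ z (Fin.castAdd q e) * KN (Ric A Ai) (Ric A Ai) (bpt z) a b c d
        + ψ z (Fin.castAdd q e) * KN A (Ric A Ai) (bpt z) a b c d
        + θ z (Fin.castAdd q e) * KN A A (bpt z) a b c d := by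
  simpa [ric, cov4_castAdd, riem_castAdd, kn_castAdd] using
    h (Fin.castAdd q a) (Fin.castAdd q b) (Fin.castAdd q c) (Fin.castAdd q d) (Fin.castAdd q e)

theorem sgk_natAdd (h : SGK (prodTensor A B) (prodTensor Ai Bi) π φ ψ θ z)
    (α β γ δ ε : Fin q) :
    cov4 B Bi (Riem B Bi) (fpt z) α β γ δ ε =
      π z (Fin.natAdd p ε) * Riem B Bi (fpt z) α β γ δ
        + φ z (Fin.natAdd p ε) * KN (Ric B Bi) (Ric B Bi) (fpt z) α β γ δ
        + ψ z (Fin.natAdd p ε) * KN B (Ric B Bi) (fpt z) α β γ δ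
        + θ z (Fin.natAdd p ε) * KN B B (fpt z) α β γ δ := by
  simpa [ric, cov4_natAdd, riem_natAdd, kn_natAdd] using
    h (Fin.natAdd p α) (Fin.natAdd p β) (Fin.natAdd p γ) (Fin.natAdd p δ) (Fin.natAdd p ε)

theorem sgk_castAdd_dir_natAdd (h : SGK (prodTensor A B) (prodTensor Ai Bi) π φ ψ θ z)
    (ε : Fin q) (a b c d : Fin p) :
    π z (Fin.natAdd p ε) * Riem A Ai (bpt z) a b c d
        + φ z (Fin.natAdd p ε) * KN (Ric A Ai) (Ric A Ai) (bpt z) a b c d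
        + ψ z (Fin.natAdd p ε) * KN A (Ric A Ai) (bpt z) a b c d
        + θ z (Fin.natAdd p ε) * KN A A (bpt z) a b c d = 0 := by
  simpa [ric, cov4_castAdd_dir_natAdd, riem_castAdd, kn_castAdd, eq_comm] using
    h (Fin.castAdd q a) (Fin.castAdd q b) (Fin.castAdd q c) (Fin.castAdd q d) (Fin.natAdd p ε)

theorem sgk_natAdd_dir_castAdd (h : SGK (prodTensor A B) (prodTensor Ai Bi) π φ ψ θ z)
    (e : Fin p) (α β γ δ : Fin q) :
    π z (Fin.castAdd q e) * Riem B Bi (fpt z) α β γ δ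
        + φ z (Fin.castAdd q e) * KN (Ric B Bi) (Ric B Bi) (fpt z) α β γ δ
        + ψ z (Fin.castAdd q e) * KN B (Ric B Bi) (fpt z) α β γ δ
        + θ z (Fin.castAdd q e) * KN B B (fpt z) α β γ δ = 0 := by
  simpa [ric, cov4_natAdd_dir_castAdd, riem_natAdd, kn_natAdd, eq_comm] using
    h (Fin.natAdd p α) (Fin.natAdd p β) (Fin.natAdd p γ) (Fin.natAdd p δ) (Fin.castAdd q e)

theorem sgk_castAdd_natAdd_natAdd_castAdd
    (h : SGK (prodTensor A B) (prodTensor Ai Bi) π φ ψ θ z) (m : Fin (p + q))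
    (a b : Fin p) (β γ : Fin q) :
    φ z m * (2 * (Ric A Ai (bpt z) a b * Ric B Bi (fpt z) β γ))
        + ψ z m * (A (bpt z) a b * Ric B Bi (fpt z) β γ + Ric A Ai (bpt z) a b * B (fpt z) β γ)
        + θ z m * (2 * (A (bpt z) a b * B (fpt z) β γ)) = 0 := by
  have := h (Fin.castAdd q a) (Fin.natAdd p β) (Fin.natAdd p γ) (Fin.castAdd q b) m
  rw [cov4_castAdd_natAdd_natAdd_castAdd, riem_castAdd_natAdd_natAdd_castAdd, ric,
    kn_castAdd_natAdd_natAdd_castAdd, kn_castAdd_natAdd_natAdd_castAdd,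
    kn_castAdd_natAdd_natAdd_castAdd] at this
  linear_combination -this

end prodTensor

theorem exists_roter_of_eq_zero {k : ℕ} (h hinv : (Fin k → ℝ) → Fin k → Fin k → ℝ)
    (x : Fin k → ℝ) {π φ ψ θ : ℝ} (hπ : π ≠ 0)
    (hR : ∀ a b c d, π * Riem h hinv x a b c d + φ * KN (Ric h hinv) (Ric h hinv) x a b c d
      + ψ * KN h (Ric h hinv) x a b c d + θ * KN h h x a b c d = 0) :
    ∃ N₁ N₂ N₃ : ℝ, ∀ a b c d, Riem h hinv x a b c d = N₁ * KN h h x a b c d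
      - N₂ * KN h (Ric h hinv) x a b c d - N₃ * KN (Ric h hinv) (Ric h hinv) x a b c d :=
  ⟨-θ / π, ψ / π, φ / π, fun a b c d => by field_simp; linear_combination hR a b c d⟩

theorem sum_sum_inv_mul_eq_card {ι : Type*} [Fintype ι] [DecidableEq ι] {h hinv : ι → ι → ℝ}
    (hs : ∀ a b, h a b = h b a) (hi : ∀ a b, ∑ c, h a c * hinv c b = if a = b then 1 else 0) :
    ∑ a, ∑ b, hinv a b * h a b = Fintype.card ι := by
  rw [Finset.sum_comm]
  simp_rw [hs, mul_comm (hinv _ _), hi]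
  simp

theorem exists_eq_mul_of_contract {ι κ : Type*} [Fintype κ] (S g : ι → ι → ℝ)
    (T h hinv : κ → κ → ℝ) {φ ψ θ : ℝ}
    (hmix : ∀ a b β γ, φ * (2 * (S a b * T β γ)) + ψ * (g a b * T β γ + S a b * h β γ)
      + θ * (2 * (g a b * h β γ)) = 0)
    (hD : 2 * (∑ β, ∑ γ, hinv β γ * T β γ) * φ + (∑ β, ∑ γ, hinv β γ * h β γ) * ψ ≠ 0) :
    ∃ lam : ℝ, ∀ a b, S a b = lam * g a b := by
  set tT := ∑ β, ∑ γ, hinv β γ * T β γ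
  set th := ∑ β, ∑ γ, hinv β γ * h β γ
  have key : ∀ a b, (2 * tT * φ + th * ψ) * S a b + (ψ * tT + 2 * θ * th) * g a b = 0 := by
    intro a b
    calc (2 * tT * φ + th * ψ) * S a b + (ψ * tT + 2 * θ * th) * g a b
        = ∑ β, ∑ γ, hinv β γ * (φ * (2 * (S a b * T β γ))
            + ψ * (g a b * T β γ + S a b * h β γ) + θ * (2 * (g a b * h β γ))) := by
          simp only [tT, th, Finset.mul_sum, Finset.sum_mul, ← Finset.sum_add_distrib]
          exact Finset.sum_congr rfl fun β _ => Finset.sum_congr rfl fun γ _ => by ring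
      _ = 0 := by simp [hmix]
  refine ⟨-(ψ * tT + 2 * θ * th) / (2 * tT * φ + th * ψ), fun a b => ?_⟩
  rw [div_mul_eq_mul_div, eq_div_iff hD]
  linear_combination key a b

theorem product_SGK_factors_general
    {p q : ℕ}
    (U : Set (Fin p → ℝ)) (V : Set (Fin q → ℝ))
    (gbar gbinv : (Fin p → ℝ) → Fin p → Fin p → ℝ)
    (gtil gtinv : (Fin q → ℝ) → Fin q → Fin q → ℝ)
    (hgbs : ∀ x ∈ U, ∀ a b, gbar x a b = gbar x b a)
    (hgbi : ∀ x ∈ U, ∀ a b, (∑ c, gbar x a c * gbinv x c b) = if a = b then (1 : ℝ) else 0)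
    (hgts : ∀ y ∈ V, ∀ a b, gtil y a b = gtil y b a)
    (hgti : ∀ y ∈ V, ∀ a b, (∑ c, gtil y a c * gtinv y c b) = if a = b then (1 : ℝ) else 0)
    (piF phiF psiF thetaF : (Fin (p + q) → ℝ) → Fin (p + q) → ℝ)
    (hsgk : ∀ z ∈ Mset U V, SGK (wMet gbar gtil (fun _ => (1 : ℝ))) (wMetInv gbinv gtinv (fun _ => (1 : ℝ))) piF phiF psiF thetaF z) :
    ((∃ piB phiB psiB thetaB : (Fin (p + q) → ℝ) → Fin p → ℝ,
        ∀ z ∈ Mset U V, ∀ a b c d e : Fin p,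
          cov4 gbar gbinv (Riem gbar gbinv) (bpt z) a b c d e =
            piB z e * Riem gbar gbinv (bpt z) a b c d + phiB z e * KN (Ric gbar gbinv) (Ric gbar gbinv) (bpt z) a b c d
            + psiB z e * KN gbar (Ric gbar gbinv) (bpt z) a b c d + thetaB z e * KN gbar gbar (bpt z) a b c d)
      ∧ (∃ piT phiT psiT thetaT : (Fin (p + q) → ℝ) → Fin q → ℝ,
          ∀ z ∈ Mset U V, ∀ α β γ δ ε : Fin q,
            cov4 gtil gtinv (Riem gtil gtinv) (fpt z) α β γ δ ε =
              piT z ε * Riem gtil gtinv (fpt z) α β γ δ + phiT z ε * KN (Ric gtil gtinv) (Ric gtil gtinv) (fpt z) α β γ δ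
              + psiT z ε * KN gtil (Ric gtil gtinv) (fpt z) α β γ δ + thetaT z ε * KN gtil gtil (fpt z) α β γ δ))
    ∧ (∀ z ∈ Mset U V, (∃ ε : Fin q, piF z (Fin.natAdd p ε) ≠ 0) →
        ∃ N₁ N₂ N₃ : ℝ, ∀ a b c d : Fin p,
          Riem gbar gbinv (bpt z) a b c d = N₁ * KN gbar gbar (bpt z) a b c d - N₂ * KN gbar (Ric gbar gbinv) (bpt z) a b c d - N₃ * KN (Ric gbar gbinv) (Ric gbar gbinv) (bpt z) a b c d)
    ∧ (∀ z ∈ Mset U V, (∃ e : Fin p, piF z (Fin.castAdd q e) ≠ 0) →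
        ∃ N₁ N₂ N₃ : ℝ, ∀ α β γ δ : Fin q,
          Riem gtil gtinv (fpt z) α β γ δ = N₁ * KN gtil gtil (fpt z) α β γ δ - N₂ * KN gtil (Ric gtil gtinv) (fpt z) α β γ δ - N₃ * KN (Ric gtil gtinv) (Ric gtil gtinv) (fpt z) α β γ δ)
    ∧ (∀ z ∈ Mset U V,
        (∃ ε : Fin q, 2 * Scal gtil gtinv (fpt z) * phiF z (Fin.natAdd p ε)
            + (q : ℝ) * psiF z (Fin.natAdd p ε) ≠ 0) →
        ∃ lam : ℝ, ∀ a b : Fin p, Ric gbar gbinv (bpt z) a b = lam * gbar (bpt z) a b)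
    ∧ (∀ z ∈ Mset U V,
        (∃ e : Fin p, 2 * Scal gbar gbinv (bpt z) * phiF z (Fin.castAdd q e)
            + (p : ℝ) * psiF z (Fin.castAdd q e) ≠ 0) →
        ∃ mu : ℝ, ∀ α β : Fin q, Ric gtil gtinv (fpt z) α β = mu * gtil (fpt z) α β) := by
  simp only [wMet_one, wMetInv_one] at hsgk
  refine ⟨⟨⟨_, _, _, _, fun z hz => prodTensor.sgk_castAdd (hsgk z hz)⟩,
      ⟨_, _, _, _, fun z hz => prodTensor.sgk_natAdd (hsgk z hz)⟩⟩, ?_, ?_, ?_, ?_⟩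
  · rintro z hz ⟨ε, hε⟩
    exact exists_roter_of_eq_zero _ _ _ hε (prodTensor.sgk_castAdd_dir_natAdd (hsgk z hz) ε)
  · rintro z hz ⟨e, he⟩
    exact exists_roter_of_eq_zero _ _ _ he (prodTensor.sgk_natAdd_dir_castAdd (hsgk z hz) e)
  · rintro z hz ⟨ε, hD⟩
    refine exists_eq_mul_of_contract _ _ _ _ (gtinv (fpt z))
      (prodTensor.sgk_castAdd_natAdd_natAdd_castAdd (hsgk z hz) (Fin.natAdd p ε)) ?_
    rwa [sum_sum_inv_mul_eq_card (hgts _ hz.2) (hgti _ hz.2), Fintype.card_fin]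
  · rintro z hz ⟨e, hD⟩
    refine exists_eq_mul_of_contract _ _ (Ric gbar gbinv (bpt z)) (gbar (bpt z)) (gbinv (bpt z))
      (φ := phiF z (Fin.castAdd q e)) (ψ := psiF z (Fin.castAdd q e))
      (θ := thetaF z (Fin.castAdd q e)) (fun β γ a b => ?_) ?_
    · linear_combination
        prodTensor.sgk_castAdd_natAdd_natAdd_castAdd (hsgk z hz) (Fin.castAdd q e) a b β γ
    · rwa [sum_sum_inv_mul_eq_card (hgbs _ hz.1) (hgbi _ hz.1), Fintype.card_fin]

/-- Corollary 4.3: properties of the factors of a product super generalized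
recurrent manifold. -/
theorem product_SGK_factors
    {p q : ℕ} (hp : 1 ≤ p) (hq : 1 ≤ q)
    (U : Set (Fin p → ℝ)) (V : Set (Fin q → ℝ))
    (hU : IsOpen U) (hV : IsOpen V)
    (gbar gbinv : (Fin p → ℝ) → Fin p → Fin p → ℝ)
    (gtil gtinv : (Fin q → ℝ) → Fin q → Fin q → ℝ)
    (hgb : ∀ a b, ContDiffOn ℝ (⊤ : ℕ∞) (fun x => gbar x a b) U)
    (hgbs : ∀ x ∈ U, ∀ a b, gbar x a b = gbar x b a)
    (hgbi : ∀ x ∈ U, ∀ a b, (∑ c, gbar x a c * gbinv x c b) = if a = b then (1 : ℝ) else 0)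
    (hgt : ∀ a b, ContDiffOn ℝ (⊤ : ℕ∞) (fun y => gtil y a b) V)
    (hgts : ∀ y ∈ V, ∀ a b, gtil y a b = gtil y b a)
    (hgti : ∀ y ∈ V, ∀ a b, (∑ c, gtil y a c * gtinv y c b) = if a = b then (1 : ℝ) else 0)
    (piF phiF psiF thetaF : (Fin (p + q) → ℝ) → Fin (p + q) → ℝ)
    (hpiF : ∀ m, ContDiffOn ℝ (⊤ : ℕ∞) (fun z => piF z m) (Mset U V))
    (hphiF : ∀ m, ContDiffOn ℝ (⊤ : ℕ∞) (fun z => phiF z m) (Mset U V))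
    (hpsiF : ∀ m, ContDiffOn ℝ (⊤ : ℕ∞) (fun z => psiF z m) (Mset U V))
    (hthetaF : ∀ m, ContDiffOn ℝ (⊤ : ℕ∞) (fun z => thetaF z m) (Mset U V))
    (hsgk : ∀ z ∈ Mset U V, SGK (wMet gbar gtil (fun _ => (1 : ℝ))) (wMetInv gbinv gtinv (fun _ => (1 : ℝ))) piF phiF psiF thetaF z) :
    ((∃ piB phiB psiB thetaB : (Fin (p + q) → ℝ) → Fin p → ℝ,
        ∀ z ∈ Mset U V, ∀ a b c d e : Fin p,
          cov4 gbar gbinv (Riem gbar gbinv) (bpt z) a b c d e =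
            piB z e * Riem gbar gbinv (bpt z) a b c d + phiB z e * KN (Ric gbar gbinv) (Ric gbar gbinv) (bpt z) a b c d
            + psiB z e * KN gbar (Ric gbar gbinv) (bpt z) a b c d + thetaB z e * KN gbar gbar (bpt z) a b c d)
      ∧ (∃ piT phiT psiT thetaT : (Fin (p + q) → ℝ) → Fin q → ℝ,
          ∀ z ∈ Mset U V, ∀ α β γ δ ε : Fin q,
            cov4 gtil gtinv (Riem gtil gtinv) (fpt z) α β γ δ ε =
              piT z ε * Riem gtil gtinv (fpt z) α β γ δ + phiT z ε * KN (Ric gtil gtinv) (Ric gtil gtinv) (fpt z) α β γ δ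
              + psiT z ε * KN gtil (Ric gtil gtinv) (fpt z) α β γ δ + thetaT z ε * KN gtil gtil (fpt z) α β γ δ))
    ∧ (∀ z ∈ Mset U V, (∃ ε : Fin q, piF z (Fin.natAdd p ε) ≠ 0) →
        ∃ N₁ N₂ N₃ : ℝ, ∀ a b c d : Fin p,
          Riem gbar gbinv (bpt z) a b c d = N₁ * KN gbar gbar (bpt z) a b c d - N₂ * KN gbar (Ric gbar gbinv) (bpt z) a b c d - N₃ * KN (Ric gbar gbinv) (Ric gbar gbinv) (bpt z) a b c d)
    ∧ (∀ z ∈ Mset U V, (∃ e : Fin p, piF z (Fin.castAdd q e) ≠ 0) →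
        ∃ N₁ N₂ N₃ : ℝ, ∀ α β γ δ : Fin q,
          Riem gtil gtinv (fpt z) α β γ δ = N₁ * KN gtil gtil (fpt z) α β γ δ - N₂ * KN gtil (Ric gtil gtinv) (fpt z) α β γ δ - N₃ * KN (Ric gtil gtinv) (Ric gtil gtinv) (fpt z) α β γ δ)
    ∧ (∀ z ∈ Mset U V,
        (∃ ε : Fin q, 2 * Scal gtil gtinv (fpt z) * phiF z (Fin.natAdd p ε)
            + (q : ℝ) * psiF z (Fin.natAdd p ε) ≠ 0) →
        ∃ lam : ℝ, ∀ a b : Fin p, Ric gbar gbinv (bpt z) a b = lam * gbar (bpt z) a b)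
    ∧ (∀ z ∈ Mset U V,
        (∃ e : Fin p, 2 * Scal gbar gbinv (bpt z) * phiF z (Fin.castAdd q e)
            + (p : ℝ) * psiF z (Fin.castAdd q e) ≠ 0) →
        ∃ mu : ℝ, ∀ α β : Fin q, Ric gtil gtinv (fpt z) α β = mu * gtil (fpt z) α β) :=
  product_SGK_factors_general U V gbar gbinv gtil gtinv hgbs hgbi hgts hgti piF phiF psiF thetaF
    hsgk
end
end

section
/- Let M = U × V carry the product metric g (warping function f ≡ 1) and let Π be a smooth 1-form on M. Then g is recurrent with 1-form Π, i.e. R_{ijkl,m} = Π_m R_{ijkl} for all indices, if and only if at every point and for all admissible indices: (i) R̄_{abcd,e} = Π_e R̄_{abcd} and Π_ε R̄_{abcd} = 0; and (ii) Π_e R̃_{αβγδ} = 0 and R̃_{αβγδ,ε} = Π_ε R̃_{αβγδ}. -/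
noncomputable section

section Aux
variable {p q : ℕ}

lemma pdZ {k : ℕ} (r : ℝ) (j : Fin k) (x : Fin k → ℝ) : pd (fun _ => r) j x = 0 := by
  simp [pd]

lemma append_bpt_fpt (z : Fin (p+q) → ℝ) : Fin.append (bpt z) (fpt z) = z := by
  funext i
  induction i using Fin.addCases with
  | left a => exact Fin.append_left _ _ _
  | right a => exact Fin.append_right _ _ _

lemma bpt_single_c (e : Fin p) : bpt (Pi.single (Fin.castAdd q e) (1:ℝ)) = Pi.single e 1 := by
  funext a
  simp [bpt, Pi.single_apply, Fin.ext_iff]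

lemma bpt_single_n (ε : Fin q) : bpt (Pi.single (Fin.natAdd p ε) (1:ℝ)) = 0 := by
  funext a
  have := a.isLt
  simp only [bpt, Pi.single_apply, Fin.ext_iff, Fin.coe_castAdd, Fin.coe_natAdd, Pi.zero_apply]
  rw [if_neg]; omega

lemma fpt_single_c (e : Fin p) : fpt (Pi.single (Fin.castAdd q e) (1:ℝ)) = 0 := by
  funext a
  have := e.isLt
  simp only [fpt, Pi.single_apply, Fin.ext_iff, Fin.coe_castAdd, Fin.coe_natAdd, Pi.zero_apply]
  rw [if_neg]; omega

lemma fpt_single_n (ε : Fin q) : fpt (Pi.single (Fin.natAdd p ε) (1:ℝ)) = Pi.single ε 1 := by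
  funext a
  simp [fpt, Pi.single_apply, Fin.ext_iff]

def Lbm (p q : ℕ) : ((Fin (p+q) → ℝ)) →L[ℝ] (Fin p → ℝ) :=
  ContinuousLinearMap.pi fun a => ContinuousLinearMap.proj (Fin.castAdd q a)
def Lfm (p q : ℕ) : ((Fin (p+q) → ℝ)) →L[ℝ] (Fin q → ℝ) :=
  ContinuousLinearMap.pi fun a => ContinuousLinearMap.proj (Fin.natAdd p a)

lemma Lbm_apply (z : Fin (p+q) → ℝ) : Lbm p q z = bpt z := rfl
lemma Lfm_apply (z : Fin (p+q) → ℝ) : Lfm p q z = fpt z := rfl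

lemma diff_append_left (v : Fin q → ℝ) :
    Differentiable ℝ (fun x : Fin p → ℝ => Fin.append x v) := by
  rw [differentiable_pi]
  intro i
  induction i using Fin.addCases with
  | left a =>
    have h : (fun x : Fin p → ℝ => Fin.append x v (Fin.castAdd q a)) = fun x => x a := by
      funext x; exact Fin.append_left _ _ _
    rw [h]; exact (ContinuousLinearMap.proj a : ((Fin p → ℝ)) →L[ℝ] ℝ).differentiable
  | right a =>
    have h : (fun x : Fin p → ℝ => Fin.append x v (Fin.natAdd p a)) = fun _ => v a := by
      funext x; exact Fin.append_right _ _ _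
    rw [h]; exact differentiable_const _

lemma diff_append_right (u : Fin p → ℝ) :
    Differentiable ℝ (fun y : Fin q → ℝ => Fin.append u y) := by
  rw [differentiable_pi]
  intro i
  induction i using Fin.addCases with
  | left a =>
    have h : (fun y : Fin q → ℝ => Fin.append u y (Fin.castAdd q a)) = fun _ => u a := by
      funext y; exact Fin.append_left _ _ _
    rw [h]; exact differentiable_const _
  | right a =>
    have h : (fun y : Fin q → ℝ => Fin.append u y (Fin.natAdd p a)) = fun y => y a := by
      funext y; exact Fin.append_right _ _ _
    rw [h]; exact (ContinuousLinearMap.proj a : ((Fin q → ℝ)) →L[ℝ] ℝ).differentiable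

lemma diff_of_comp_bpt {F : (Fin p → ℝ) → ℝ} {z : Fin (p+q) → ℝ}
    (hc : DifferentiableAt ℝ (fun y : Fin (p+q) → ℝ => F (bpt y)) z) :
    DifferentiableAt ℝ F (bpt z) := by
  have h3 : F = (fun y : Fin (p+q) → ℝ => F (bpt y)) ∘ (fun x : Fin p → ℝ => Fin.append x (fpt z)) := by
    funext x
    simp only [Function.comp_apply]
    congr 1
    funext a
    exact (Fin.append_left _ _ _).symm
  have hg : DifferentiableAt ℝ (fun y : Fin (p+q) → ℝ => F (bpt y)) (Fin.append (bpt z) (fpt z)) := by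
    rw [append_bpt_fpt]; exact hc
  rw [h3]
  exact hg.comp (bpt z) ((diff_append_left (fpt z)) (bpt z))

lemma diff_of_comp_fpt {F : (Fin q → ℝ) → ℝ} {z : Fin (p+q) → ℝ}
    (hc : DifferentiableAt ℝ (fun y : Fin (p+q) → ℝ => F (fpt y)) z) :
    DifferentiableAt ℝ F (fpt z) := by
  have h3 : F = (fun y : Fin (p+q) → ℝ => F (fpt y)) ∘ (fun x : Fin q → ℝ => Fin.append (bpt z) x) := by
    funext x
    simp only [Function.comp_apply]
    congr 1
    funext a
    exact (Fin.append_right _ _ _).symm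
  have hg : DifferentiableAt ℝ (fun y : Fin (p+q) → ℝ => F (fpt y)) (Fin.append (bpt z) (fpt z)) := by
    rw [append_bpt_fpt]; exact hc
  rw [h3]
  exact hg.comp (fpt z) ((diff_append_right (bpt z)) (fpt z))

lemma pd_bpt_c (F : (Fin p → ℝ) → ℝ) (e : Fin p) (z : Fin (p+q) → ℝ) :
    pd (fun y => F (bpt y)) (Fin.castAdd q e) z = pd F e (bpt z) := by
  by_cases hF : DifferentiableAt ℝ F (bpt z)
  · unfold pd
    have h1 : (fun y : Fin (p+q) → ℝ => F (bpt y)) = F ∘ (Lbm p q) := rfl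
    have hF' : DifferentiableAt ℝ F ((Lbm p q) z) := hF
    rw [h1, fderiv_comp z hF' ((Lbm p q).differentiableAt), (Lbm p q).fderiv]
    show fderiv ℝ F ((Lbm p q) z) ((Lbm p q) (Pi.single (Fin.castAdd q e) 1)) = _
    rw [Lbm_apply, Lbm_apply, bpt_single_c]
  · unfold pd
    rw [fderiv_zero_of_not_differentiableAt hF,
      fderiv_zero_of_not_differentiableAt (fun hc => hF (diff_of_comp_bpt hc))]
    simp

lemma pd_bpt_n (F : (Fin p → ℝ) → ℝ) (ε : Fin q) (z : Fin (p+q) → ℝ) :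
    pd (fun y => F (bpt y)) (Fin.natAdd p ε) z = 0 := by
  by_cases hF : DifferentiableAt ℝ F (bpt z)
  · unfold pd
    have h1 : (fun y : Fin (p+q) → ℝ => F (bpt y)) = F ∘ (Lbm p q) := rfl
    have hF' : DifferentiableAt ℝ F ((Lbm p q) z) := hF
    rw [h1, fderiv_comp z hF' ((Lbm p q).differentiableAt), (Lbm p q).fderiv]
    show fderiv ℝ F ((Lbm p q) z) ((Lbm p q) (Pi.single (Fin.natAdd p ε) 1)) = _
    rw [Lbm_apply (Pi.single (Fin.natAdd p ε) 1), bpt_single_n, map_zero]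
  · unfold pd
    rw [fderiv_zero_of_not_differentiableAt (fun hc => hF (diff_of_comp_bpt hc))]
    simp

lemma pd_fpt_c (F : (Fin q → ℝ) → ℝ) (e : Fin p) (z : Fin (p+q) → ℝ) :
    pd (fun y => F (fpt y)) (Fin.castAdd q e) z = 0 := by
  by_cases hF : DifferentiableAt ℝ F (fpt z)
  · unfold pd
    have h1 : (fun y : Fin (p+q) → ℝ => F (fpt y)) = F ∘ (Lfm p q) := rfl
    have hF' : DifferentiableAt ℝ F ((Lfm p q) z) := hF
    rw [h1, fderiv_comp z hF' ((Lfm p q).differentiableAt), (Lfm p q).fderiv]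
    show fderiv ℝ F ((Lfm p q) z) ((Lfm p q) (Pi.single (Fin.castAdd q e) 1)) = _
    rw [Lfm_apply (Pi.single (Fin.castAdd q e) 1), fpt_single_c, map_zero]
  · unfold pd
    rw [fderiv_zero_of_not_differentiableAt (fun hc => hF (diff_of_comp_fpt hc))]
    simp

lemma pd_fpt_n (F : (Fin q → ℝ) → ℝ) (ε : Fin q) (z : Fin (p+q) → ℝ) :
    pd (fun y => F (fpt y)) (Fin.natAdd p ε) z = pd F ε (fpt z) := by
  by_cases hF : DifferentiableAt ℝ F (fpt z)
  · unfold pd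
    have h1 : (fun y : Fin (p+q) → ℝ => F (fpt y)) = F ∘ (Lfm p q) := rfl
    have hF' : DifferentiableAt ℝ F ((Lfm p q) z) := hF
    rw [h1, fderiv_comp z hF' ((Lfm p q).differentiableAt), (Lfm p q).fderiv]
    show fderiv ℝ F ((Lfm p q) z) ((Lfm p q) (Pi.single (Fin.natAdd p ε) 1)) = _
    rw [Lfm_apply, Lfm_apply, fpt_single_n]
  · unfold pd
    rw [fderiv_zero_of_not_differentiableAt hF,
      fderiv_zero_of_not_differentiableAt (fun hc => hF (diff_of_comp_fpt hc))]
    simp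
end Aux

section Main
variable {p q : ℕ} (gbar gbinv : (Fin p → ℝ) → Fin p → Fin p → ℝ)
  (gtil gtinv : (Fin q → ℝ) → Fin q → Fin q → ℝ)

lemma met_cc (z : Fin (p+q) → ℝ) (a b : Fin p) :
    wMet gbar gtil (fun _ => (1:ℝ)) z (Fin.castAdd q a) (Fin.castAdd q b) = gbar (bpt z) a b := by
  simp [wMet, wPair]
lemma met_cn (z : Fin (p+q) → ℝ) (a : Fin p) (β : Fin q) :
    wMet gbar gtil (fun _ => (1:ℝ)) z (Fin.castAdd q a) (Fin.natAdd p β) = 0 := by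
  simp [wMet, wPair]
lemma met_nc (z : Fin (p+q) → ℝ) (α : Fin q) (b : Fin p) :
    wMet gbar gtil (fun _ => (1:ℝ)) z (Fin.natAdd p α) (Fin.castAdd q b) = 0 := by
  simp [wMet, wPair]
lemma met_nn (z : Fin (p+q) → ℝ) (α β : Fin q) :
    wMet gbar gtil (fun _ => (1:ℝ)) z (Fin.natAdd p α) (Fin.natAdd p β) = gtil (fpt z) α β := by
  simp [wMet, wPair]
lemma miv_cc (z : Fin (p+q) → ℝ) (a b : Fin p) :
    wMetInv gbinv gtinv (fun _ => (1:ℝ)) z (Fin.castAdd q a) (Fin.castAdd q b) = gbinv (bpt z) a b := by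
  simp [wMetInv, wPair]
lemma miv_cn (z : Fin (p+q) → ℝ) (a : Fin p) (β : Fin q) :
    wMetInv gbinv gtinv (fun _ => (1:ℝ)) z (Fin.castAdd q a) (Fin.natAdd p β) = 0 := by
  simp [wMetInv, wPair]
lemma miv_nc (z : Fin (p+q) → ℝ) (α : Fin q) (b : Fin p) :
    wMetInv gbinv gtinv (fun _ => (1:ℝ)) z (Fin.natAdd p α) (Fin.castAdd q b) = 0 := by
  simp [wMetInv, wPair]
lemma miv_nn (z : Fin (p+q) → ℝ) (α β : Fin q) :
    wMetInv gbinv gtinv (fun _ => (1:ℝ)) z (Fin.natAdd p α) (Fin.natAdd p β) = gtinv (fpt z) α β := by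
  simp [wMetInv, wPair]

lemma pdg_c (a b e : Fin p) (z : Fin (p+q) → ℝ) :
    pd (fun y => gbar (bpt y) a b) (Fin.castAdd q e) z = pd (fun x => gbar x a b) e (bpt z) :=
  pd_bpt_c (fun x => gbar x a b) e z
lemma pdg_n (a b : Fin p) (ε : Fin q) (z : Fin (p+q) → ℝ) :
    pd (fun y => gbar (bpt y) a b) (Fin.natAdd p ε) z = 0 :=
  pd_bpt_n (fun x => gbar x a b) ε z
lemma pdt_c (α β : Fin q) (e : Fin p) (z : Fin (p+q) → ℝ) :
    pd (fun y => gtil (fpt y) α β) (Fin.castAdd q e) z = 0 :=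
  pd_fpt_c (fun x => gtil x α β) e z
lemma pdt_n (α β ε : Fin q) (z : Fin (p+q) → ℝ) :
    pd (fun y => gtil (fpt y) α β) (Fin.natAdd p ε) z = pd (fun x => gtil x α β) ε (fpt z) :=
  pd_fpt_n (fun x => gtil x α β) ε z
lemma pdcb_c (i j l e : Fin p) (z : Fin (p+q) → ℝ) :
    pd (fun y => Christoffel gbar gbinv i j l (bpt y)) (Fin.castAdd q e) z
      = pd (Christoffel gbar gbinv i j l) e (bpt z) :=
  pd_bpt_c (Christoffel gbar gbinv i j l) e z
lemma pdcb_n (i j l : Fin p) (ε : Fin q) (z : Fin (p+q) → ℝ) :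
    pd (fun y => Christoffel gbar gbinv i j l (bpt y)) (Fin.natAdd p ε) z = 0 :=
  pd_bpt_n (Christoffel gbar gbinv i j l) ε z
lemma pdct_c (i j l : Fin q) (e : Fin p) (z : Fin (p+q) → ℝ) :
    pd (fun y => Christoffel gtil gtinv i j l (fpt y)) (Fin.castAdd q e) z = 0 :=
  pd_fpt_c (Christoffel gtil gtinv i j l) e z
lemma pdct_n (i j l ε : Fin q) (z : Fin (p+q) → ℝ) :
    pd (fun y => Christoffel gtil gtinv i j l (fpt y)) (Fin.natAdd p ε) z
      = pd (Christoffel gtil gtinv i j l) ε (fpt z) :=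
  pd_fpt_n (Christoffel gtil gtinv i j l) ε z
lemma pdrb_c (i j s l e : Fin p) (z : Fin (p+q) → ℝ) :
    pd (fun y => Riem gbar gbinv (bpt y) i j s l) (Fin.castAdd q e) z
      = pd (fun x => Riem gbar gbinv x i j s l) e (bpt z) :=
  pd_bpt_c (fun x => Riem gbar gbinv x i j s l) e z
lemma pdrb_n (i j s l : Fin p) (ε : Fin q) (z : Fin (p+q) → ℝ) :
    pd (fun y => Riem gbar gbinv (bpt y) i j s l) (Fin.natAdd p ε) z = 0 :=
  pd_bpt_n (fun x => Riem gbar gbinv x i j s l) ε z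
lemma pdrt_c (i j s l : Fin q) (e : Fin p) (z : Fin (p+q) → ℝ) :
    pd (fun y => Riem gtil gtinv (fpt y) i j s l) (Fin.castAdd q e) z = 0 :=
  pd_fpt_c (fun x => Riem gtil gtinv x i j s l) e z
lemma pdrt_n (i j s l ε : Fin q) (z : Fin (p+q) → ℝ) :
    pd (fun y => Riem gtil gtinv (fpt y) i j s l) (Fin.natAdd p ε) z
      = pd (fun x => Riem gtil gtinv x i j s l) ε (fpt z) :=
  pd_fpt_n (fun x => Riem gtil gtinv x i j s l) ε z


lemma chr_bbb (i : Fin p) (j : Fin p) (l : Fin p) :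
    Christoffel (wMet gbar gtil (fun _ => (1:ℝ))) (wMetInv gbinv gtinv (fun _ => (1:ℝ))) (Fin.castAdd q i) (Fin.castAdd q j) (Fin.castAdd q l) = fun z => Christoffel gbar gbinv i j l (bpt z) := by
  funext z
  unfold Christoffel
  simp only [Fin.sum_univ_add, met_cc, met_cn, met_nc, met_nn, miv_cc, miv_cn, miv_nc, miv_nn, pdg_c, pdg_n, pdt_c, pdt_n, pdZ, one_mul, mul_one, mul_zero, zero_mul, add_zero, zero_add, sub_zero, zero_sub, neg_zero, sub_self, Finset.sum_const_zero]

lemma chr_bbf (i : Fin p) (j : Fin p) (l : Fin q) :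
    Christoffel (wMet gbar gtil (fun _ => (1:ℝ))) (wMetInv gbinv gtinv (fun _ => (1:ℝ))) (Fin.castAdd q i) (Fin.castAdd q j) (Fin.natAdd p l) = fun _ => (0:ℝ) := by
  funext z
  unfold Christoffel
  simp only [Fin.sum_univ_add, met_cc, met_cn, met_nc, met_nn, miv_cc, miv_cn, miv_nc, miv_nn, pdg_c, pdg_n, pdt_c, pdt_n, pdZ, one_mul, mul_one, mul_zero, zero_mul, add_zero, zero_add, sub_zero, zero_sub, neg_zero, sub_self, Finset.sum_const_zero]

lemma chr_bfb (i : Fin p) (j : Fin q) (l : Fin p) :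
    Christoffel (wMet gbar gtil (fun _ => (1:ℝ))) (wMetInv gbinv gtinv (fun _ => (1:ℝ))) (Fin.castAdd q i) (Fin.natAdd p j) (Fin.castAdd q l) = fun _ => (0:ℝ) := by
  funext z
  unfold Christoffel
  simp only [Fin.sum_univ_add, met_cc, met_cn, met_nc, met_nn, miv_cc, miv_cn, miv_nc, miv_nn, pdg_c, pdg_n, pdt_c, pdt_n, pdZ, one_mul, mul_one, mul_zero, zero_mul, add_zero, zero_add, sub_zero, zero_sub, neg_zero, sub_self, Finset.sum_const_zero]

lemma chr_bff (i : Fin p) (j : Fin q) (l : Fin q) :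
    Christoffel (wMet gbar gtil (fun _ => (1:ℝ))) (wMetInv gbinv gtinv (fun _ => (1:ℝ))) (Fin.castAdd q i) (Fin.natAdd p j) (Fin.natAdd p l) = fun _ => (0:ℝ) := by
  funext z
  unfold Christoffel
  simp only [Fin.sum_univ_add, met_cc, met_cn, met_nc, met_nn, miv_cc, miv_cn, miv_nc, miv_nn, pdg_c, pdg_n, pdt_c, pdt_n, pdZ, one_mul, mul_one, mul_zero, zero_mul, add_zero, zero_add, sub_zero, zero_sub, neg_zero, sub_self, Finset.sum_const_zero]

lemma chr_fbb (i : Fin q) (j : Fin p) (l : Fin p) :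
    Christoffel (wMet gbar gtil (fun _ => (1:ℝ))) (wMetInv gbinv gtinv (fun _ => (1:ℝ))) (Fin.natAdd p i) (Fin.castAdd q j) (Fin.castAdd q l) = fun _ => (0:ℝ) := by
  funext z
  unfold Christoffel
  simp only [Fin.sum_univ_add, met_cc, met_cn, met_nc, met_nn, miv_cc, miv_cn, miv_nc, miv_nn, pdg_c, pdg_n, pdt_c, pdt_n, pdZ, one_mul, mul_one, mul_zero, zero_mul, add_zero, zero_add, sub_zero, zero_sub, neg_zero, sub_self, Finset.sum_const_zero]

lemma chr_fbf (i : Fin q) (j : Fin p) (l : Fin q) :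
    Christoffel (wMet gbar gtil (fun _ => (1:ℝ))) (wMetInv gbinv gtinv (fun _ => (1:ℝ))) (Fin.natAdd p i) (Fin.castAdd q j) (Fin.natAdd p l) = fun _ => (0:ℝ) := by
  funext z
  unfold Christoffel
  simp only [Fin.sum_univ_add, met_cc, met_cn, met_nc, met_nn, miv_cc, miv_cn, miv_nc, miv_nn, pdg_c, pdg_n, pdt_c, pdt_n, pdZ, one_mul, mul_one, mul_zero, zero_mul, add_zero, zero_add, sub_zero, zero_sub, neg_zero, sub_self, Finset.sum_const_zero]

lemma chr_ffb (i : Fin q) (j : Fin q) (l : Fin p) :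
    Christoffel (wMet gbar gtil (fun _ => (1:ℝ))) (wMetInv gbinv gtinv (fun _ => (1:ℝ))) (Fin.natAdd p i) (Fin.natAdd p j) (Fin.castAdd q l) = fun _ => (0:ℝ) := by
  funext z
  unfold Christoffel
  simp only [Fin.sum_univ_add, met_cc, met_cn, met_nc, met_nn, miv_cc, miv_cn, miv_nc, miv_nn, pdg_c, pdg_n, pdt_c, pdt_n, pdZ, one_mul, mul_one, mul_zero, zero_mul, add_zero, zero_add, sub_zero, zero_sub, neg_zero, sub_self, Finset.sum_const_zero]

lemma chr_fff (i : Fin q) (j : Fin q) (l : Fin q) :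
    Christoffel (wMet gbar gtil (fun _ => (1:ℝ))) (wMetInv gbinv gtinv (fun _ => (1:ℝ))) (Fin.natAdd p i) (Fin.natAdd p j) (Fin.natAdd p l) = fun z => Christoffel gtil gtinv i j l (fpt z) := by
  funext z
  unfold Christoffel
  simp only [Fin.sum_univ_add, met_cc, met_cn, met_nc, met_nn, miv_cc, miv_cn, miv_nc, miv_nn, pdg_c, pdg_n, pdt_c, pdt_n, pdZ, one_mul, mul_one, mul_zero, zero_mul, add_zero, zero_add, sub_zero, zero_sub, neg_zero, sub_self, Finset.sum_const_zero]

lemma riem_bbbb (x : Fin (p+q) → ℝ) (i : Fin p) (j : Fin p) (s : Fin p) (l : Fin p) :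
    Riem (wMet gbar gtil (fun _ => (1:ℝ))) (wMetInv gbinv gtinv (fun _ => (1:ℝ))) x (Fin.castAdd q i) (Fin.castAdd q j) (Fin.castAdd q s) (Fin.castAdd q l) = Riem gbar gbinv (bpt x) i j s l := by
  unfold Riem
  simp only [Fin.sum_univ_add, met_cc, met_cn, met_nc, met_nn, miv_cc, miv_cn, miv_nc, miv_nn, pdg_c, pdg_n, pdt_c, pdt_n, pdZ, one_mul, mul_one, mul_zero, zero_mul, add_zero, zero_add, sub_zero, zero_sub, neg_zero, sub_self, Finset.sum_const_zero, chr_bbb, chr_bbf, chr_bfb, chr_bff, chr_fbb, chr_fbf, chr_ffb, chr_fff, pdcb_c, pdcb_n, pdct_c, pdct_n]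

lemma riem_bbbf (x : Fin (p+q) → ℝ) (i : Fin p) (j : Fin p) (s : Fin p) (l : Fin q) :
    Riem (wMet gbar gtil (fun _ => (1:ℝ))) (wMetInv gbinv gtinv (fun _ => (1:ℝ))) x (Fin.castAdd q i) (Fin.castAdd q j) (Fin.castAdd q s) (Fin.natAdd p l) = 0 := by
  unfold Riem
  simp only [Fin.sum_univ_add, met_cc, met_cn, met_nc, met_nn, miv_cc, miv_cn, miv_nc, miv_nn, pdg_c, pdg_n, pdt_c, pdt_n, pdZ, one_mul, mul_one, mul_zero, zero_mul, add_zero, zero_add, sub_zero, zero_sub, neg_zero, sub_self, Finset.sum_const_zero, chr_bbb, chr_bbf, chr_bfb, chr_bff, chr_fbb, chr_fbf, chr_ffb, chr_fff, pdcb_c, pdcb_n, pdct_c, pdct_n]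

lemma riem_bbfb (x : Fin (p+q) → ℝ) (i : Fin p) (j : Fin p) (s : Fin q) (l : Fin p) :
    Riem (wMet gbar gtil (fun _ => (1:ℝ))) (wMetInv gbinv gtinv (fun _ => (1:ℝ))) x (Fin.castAdd q i) (Fin.castAdd q j) (Fin.natAdd p s) (Fin.castAdd q l) = 0 := by
  unfold Riem
  simp only [Fin.sum_univ_add, met_cc, met_cn, met_nc, met_nn, miv_cc, miv_cn, miv_nc, miv_nn, pdg_c, pdg_n, pdt_c, pdt_n, pdZ, one_mul, mul_one, mul_zero, zero_mul, add_zero, zero_add, sub_zero, zero_sub, neg_zero, sub_self, Finset.sum_const_zero, chr_bbb, chr_bbf, chr_bfb, chr_bff, chr_fbb, chr_fbf, chr_ffb, chr_fff, pdcb_c, pdcb_n, pdct_c, pdct_n]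

lemma riem_bbff (x : Fin (p+q) → ℝ) (i : Fin p) (j : Fin p) (s : Fin q) (l : Fin q) :
    Riem (wMet gbar gtil (fun _ => (1:ℝ))) (wMetInv gbinv gtinv (fun _ => (1:ℝ))) x (Fin.castAdd q i) (Fin.castAdd q j) (Fin.natAdd p s) (Fin.natAdd p l) = 0 := by
  unfold Riem
  simp only [Fin.sum_univ_add, met_cc, met_cn, met_nc, met_nn, miv_cc, miv_cn, miv_nc, miv_nn, pdg_c, pdg_n, pdt_c, pdt_n, pdZ, one_mul, mul_one, mul_zero, zero_mul, add_zero, zero_add, sub_zero, zero_sub, neg_zero, sub_self, Finset.sum_const_zero, chr_bbb, chr_bbf, chr_bfb, chr_bff, chr_fbb, chr_fbf, chr_ffb, chr_fff, pdcb_c, pdcb_n, pdct_c, pdct_n]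

lemma riem_bfbb (x : Fin (p+q) → ℝ) (i : Fin p) (j : Fin q) (s : Fin p) (l : Fin p) :
    Riem (wMet gbar gtil (fun _ => (1:ℝ))) (wMetInv gbinv gtinv (fun _ => (1:ℝ))) x (Fin.castAdd q i) (Fin.natAdd p j) (Fin.castAdd q s) (Fin.castAdd q l) = 0 := by
  unfold Riem
  simp only [Fin.sum_univ_add, met_cc, met_cn, met_nc, met_nn, miv_cc, miv_cn, miv_nc, miv_nn, pdg_c, pdg_n, pdt_c, pdt_n, pdZ, one_mul, mul_one, mul_zero, zero_mul, add_zero, zero_add, sub_zero, zero_sub, neg_zero, sub_self, Finset.sum_const_zero, chr_bbb, chr_bbf, chr_bfb, chr_bff, chr_fbb, chr_fbf, chr_ffb, chr_fff, pdcb_c, pdcb_n, pdct_c, pdct_n]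

lemma riem_bfbf (x : Fin (p+q) → ℝ) (i : Fin p) (j : Fin q) (s : Fin p) (l : Fin q) :
    Riem (wMet gbar gtil (fun _ => (1:ℝ))) (wMetInv gbinv gtinv (fun _ => (1:ℝ))) x (Fin.castAdd q i) (Fin.natAdd p j) (Fin.castAdd q s) (Fin.natAdd p l) = 0 := by
  unfold Riem
  simp only [Fin.sum_univ_add, met_cc, met_cn, met_nc, met_nn, miv_cc, miv_cn, miv_nc, miv_nn, pdg_c, pdg_n, pdt_c, pdt_n, pdZ, one_mul, mul_one, mul_zero, zero_mul, add_zero, zero_add, sub_zero, zero_sub, neg_zero, sub_self, Finset.sum_const_zero, chr_bbb, chr_bbf, chr_bfb, chr_bff, chr_fbb, chr_fbf, chr_ffb, chr_fff, pdcb_c, pdcb_n, pdct_c, pdct_n]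

lemma riem_bffb (x : Fin (p+q) → ℝ) (i : Fin p) (j : Fin q) (s : Fin q) (l : Fin p) :
    Riem (wMet gbar gtil (fun _ => (1:ℝ))) (wMetInv gbinv gtinv (fun _ => (1:ℝ))) x (Fin.castAdd q i) (Fin.natAdd p j) (Fin.natAdd p s) (Fin.castAdd q l) = 0 := by
  unfold Riem
  simp only [Fin.sum_univ_add, met_cc, met_cn, met_nc, met_nn, miv_cc, miv_cn, miv_nc, miv_nn, pdg_c, pdg_n, pdt_c, pdt_n, pdZ, one_mul, mul_one, mul_zero, zero_mul, add_zero, zero_add, sub_zero, zero_sub, neg_zero, sub_self, Finset.sum_const_zero, chr_bbb, chr_bbf, chr_bfb, chr_bff, chr_fbb, chr_fbf, chr_ffb, chr_fff, pdcb_c, pdcb_n, pdct_c, pdct_n]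

lemma riem_bfff (x : Fin (p+q) → ℝ) (i : Fin p) (j : Fin q) (s : Fin q) (l : Fin q) :
    Riem (wMet gbar gtil (fun _ => (1:ℝ))) (wMetInv gbinv gtinv (fun _ => (1:ℝ))) x (Fin.castAdd q i) (Fin.natAdd p j) (Fin.natAdd p s) (Fin.natAdd p l) = 0 := by
  unfold Riem
  simp only [Fin.sum_univ_add, met_cc, met_cn, met_nc, met_nn, miv_cc, miv_cn, miv_nc, miv_nn, pdg_c, pdg_n, pdt_c, pdt_n, pdZ, one_mul, mul_one, mul_zero, zero_mul, add_zero, zero_add, sub_zero, zero_sub, neg_zero, sub_self, Finset.sum_const_zero, chr_bbb, chr_bbf, chr_bfb, chr_bff, chr_fbb, chr_fbf, chr_ffb, chr_fff, pdcb_c, pdcb_n, pdct_c, pdct_n]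

lemma riem_fbbb (x : Fin (p+q) → ℝ) (i : Fin q) (j : Fin p) (s : Fin p) (l : Fin p) :
    Riem (wMet gbar gtil (fun _ => (1:ℝ))) (wMetInv gbinv gtinv (fun _ => (1:ℝ))) x (Fin.natAdd p i) (Fin.castAdd q j) (Fin.castAdd q s) (Fin.castAdd q l) = 0 := by
  unfold Riem
  simp only [Fin.sum_univ_add, met_cc, met_cn, met_nc, met_nn, miv_cc, miv_cn, miv_nc, miv_nn, pdg_c, pdg_n, pdt_c, pdt_n, pdZ, one_mul, mul_one, mul_zero, zero_mul, add_zero, zero_add, sub_zero, zero_sub, neg_zero, sub_self, Finset.sum_const_zero, chr_bbb, chr_bbf, chr_bfb, chr_bff, chr_fbb, chr_fbf, chr_ffb, chr_fff, pdcb_c, pdcb_n, pdct_c, pdct_n]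

lemma riem_fbbf (x : Fin (p+q) → ℝ) (i : Fin q) (j : Fin p) (s : Fin p) (l : Fin q) :
    Riem (wMet gbar gtil (fun _ => (1:ℝ))) (wMetInv gbinv gtinv (fun _ => (1:ℝ))) x (Fin.natAdd p i) (Fin.castAdd q j) (Fin.castAdd q s) (Fin.natAdd p l) = 0 := by
  unfold Riem
  simp only [Fin.sum_univ_add, met_cc, met_cn, met_nc, met_nn, miv_cc, miv_cn, miv_nc, miv_nn, pdg_c, pdg_n, pdt_c, pdt_n, pdZ, one_mul, mul_one, mul_zero, zero_mul, add_zero, zero_add, sub_zero, zero_sub, neg_zero, sub_self, Finset.sum_const_zero, chr_bbb, chr_bbf, chr_bfb, chr_bff, chr_fbb, chr_fbf, chr_ffb, chr_fff, pdcb_c, pdcb_n, pdct_c, pdct_n]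

lemma riem_fbfb (x : Fin (p+q) → ℝ) (i : Fin q) (j : Fin p) (s : Fin q) (l : Fin p) :
    Riem (wMet gbar gtil (fun _ => (1:ℝ))) (wMetInv gbinv gtinv (fun _ => (1:ℝ))) x (Fin.natAdd p i) (Fin.castAdd q j) (Fin.natAdd p s) (Fin.castAdd q l) = 0 := by
  unfold Riem
  simp only [Fin.sum_univ_add, met_cc, met_cn, met_nc, met_nn, miv_cc, miv_cn, miv_nc, miv_nn, pdg_c, pdg_n, pdt_c, pdt_n, pdZ, one_mul, mul_one, mul_zero, zero_mul, add_zero, zero_add, sub_zero, zero_sub, neg_zero, sub_self, Finset.sum_const_zero, chr_bbb, chr_bbf, chr_bfb, chr_bff, chr_fbb, chr_fbf, chr_ffb, chr_fff, pdcb_c, pdcb_n, pdct_c, pdct_n]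

lemma riem_fbff (x : Fin (p+q) → ℝ) (i : Fin q) (j : Fin p) (s : Fin q) (l : Fin q) :
    Riem (wMet gbar gtil (fun _ => (1:ℝ))) (wMetInv gbinv gtinv (fun _ => (1:ℝ))) x (Fin.natAdd p i) (Fin.castAdd q j) (Fin.natAdd p s) (Fin.natAdd p l) = 0 := by
  unfold Riem
  simp only [Fin.sum_univ_add, met_cc, met_cn, met_nc, met_nn, miv_cc, miv_cn, miv_nc, miv_nn, pdg_c, pdg_n, pdt_c, pdt_n, pdZ, one_mul, mul_one, mul_zero, zero_mul, add_zero, zero_add, sub_zero, zero_sub, neg_zero, sub_self, Finset.sum_const_zero, chr_bbb, chr_bbf, chr_bfb, chr_bff, chr_fbb, chr_fbf, chr_ffb, chr_fff, pdcb_c, pdcb_n, pdct_c, pdct_n]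

lemma riem_ffbb (x : Fin (p+q) → ℝ) (i : Fin q) (j : Fin q) (s : Fin p) (l : Fin p) :
    Riem (wMet gbar gtil (fun _ => (1:ℝ))) (wMetInv gbinv gtinv (fun _ => (1:ℝ))) x (Fin.natAdd p i) (Fin.natAdd p j) (Fin.castAdd q s) (Fin.castAdd q l) = 0 := by
  unfold Riem
  simp only [Fin.sum_univ_add, met_cc, met_cn, met_nc, met_nn, miv_cc, miv_cn, miv_nc, miv_nn, pdg_c, pdg_n, pdt_c, pdt_n, pdZ, one_mul, mul_one, mul_zero, zero_mul, add_zero, zero_add, sub_zero, zero_sub, neg_zero, sub_self, Finset.sum_const_zero, chr_bbb, chr_bbf, chr_bfb, chr_bff, chr_fbb, chr_fbf, chr_ffb, chr_fff, pdcb_c, pdcb_n, pdct_c, pdct_n]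

lemma riem_ffbf (x : Fin (p+q) → ℝ) (i : Fin q) (j : Fin q) (s : Fin p) (l : Fin q) :
    Riem (wMet gbar gtil (fun _ => (1:ℝ))) (wMetInv gbinv gtinv (fun _ => (1:ℝ))) x (Fin.natAdd p i) (Fin.natAdd p j) (Fin.castAdd q s) (Fin.natAdd p l) = 0 := by
  unfold Riem
  simp only [Fin.sum_univ_add, met_cc, met_cn, met_nc, met_nn, miv_cc, miv_cn, miv_nc, miv_nn, pdg_c, pdg_n, pdt_c, pdt_n, pdZ, one_mul, mul_one, mul_zero, zero_mul, add_zero, zero_add, sub_zero, zero_sub, neg_zero, sub_self, Finset.sum_const_zero, chr_bbb, chr_bbf, chr_bfb, chr_bff, chr_fbb, chr_fbf, chr_ffb, chr_fff, pdcb_c, pdcb_n, pdct_c, pdct_n]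

lemma riem_fffb (x : Fin (p+q) → ℝ) (i : Fin q) (j : Fin q) (s : Fin q) (l : Fin p) :
    Riem (wMet gbar gtil (fun _ => (1:ℝ))) (wMetInv gbinv gtinv (fun _ => (1:ℝ))) x (Fin.natAdd p i) (Fin.natAdd p j) (Fin.natAdd p s) (Fin.castAdd q l) = 0 := by
  unfold Riem
  simp only [Fin.sum_univ_add, met_cc, met_cn, met_nc, met_nn, miv_cc, miv_cn, miv_nc, miv_nn, pdg_c, pdg_n, pdt_c, pdt_n, pdZ, one_mul, mul_one, mul_zero, zero_mul, add_zero, zero_add, sub_zero, zero_sub, neg_zero, sub_self, Finset.sum_const_zero, chr_bbb, chr_bbf, chr_bfb, chr_bff, chr_fbb, chr_fbf, chr_ffb, chr_fff, pdcb_c, pdcb_n, pdct_c, pdct_n]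

lemma riem_ffff (x : Fin (p+q) → ℝ) (i : Fin q) (j : Fin q) (s : Fin q) (l : Fin q) :
    Riem (wMet gbar gtil (fun _ => (1:ℝ))) (wMetInv gbinv gtinv (fun _ => (1:ℝ))) x (Fin.natAdd p i) (Fin.natAdd p j) (Fin.natAdd p s) (Fin.natAdd p l) = Riem gtil gtinv (fpt x) i j s l := by
  unfold Riem
  simp only [Fin.sum_univ_add, met_cc, met_cn, met_nc, met_nn, miv_cc, miv_cn, miv_nc, miv_nn, pdg_c, pdg_n, pdt_c, pdt_n, pdZ, one_mul, mul_one, mul_zero, zero_mul, add_zero, zero_add, sub_zero, zero_sub, neg_zero, sub_self, Finset.sum_const_zero, chr_bbb, chr_bbf, chr_bfb, chr_bff, chr_fbb, chr_fbf, chr_ffb, chr_fff, pdcb_c, pdcb_n, pdct_c, pdct_n]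

lemma cov4_bb (z : Fin (p+q) → ℝ) (i j s l : Fin p) (m : Fin p) :
    cov4 (wMet gbar gtil (fun _ => (1:ℝ))) (wMetInv gbinv gtinv (fun _ => (1:ℝ)))
      (Riem (wMet gbar gtil (fun _ => (1:ℝ))) (wMetInv gbinv gtinv (fun _ => (1:ℝ))))
      z (Fin.castAdd q i) (Fin.castAdd q j) (Fin.castAdd q s) (Fin.castAdd q l) (Fin.castAdd q m) = cov4 gbar gbinv (Riem gbar gbinv) (bpt z) i j s l m := by
  unfold cov4
  simp only [Fin.sum_univ_add, met_cc, met_cn, met_nc, met_nn, miv_cc, miv_cn, miv_nc, miv_nn, pdg_c, pdg_n, pdt_c, pdt_n, pdZ, one_mul, mul_one, mul_zero, zero_mul, add_zero, zero_add, sub_zero, zero_sub, neg_zero, sub_self, Finset.sum_const_zero, chr_bbb, chr_bbf, chr_bfb, chr_bff, chr_fbb, chr_fbf, chr_ffb, chr_fff, pdcb_c, pdcb_n, pdct_c, pdct_n, riem_bbbb, riem_bbbf, riem_bbfb, riem_bbff, riem_bfbb, riem_bfbf, riem_bffb, riem_bfff, riem_fbbb, riem_fbbf, riem_fbfb, riem_fbff,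 riem_ffbb, riem_ffbf, riem_fffb, riem_ffff, pdrb_c, pdrb_n, pdrt_c, pdrt_n]

lemma cov4_bf (z : Fin (p+q) → ℝ) (i j s l : Fin p) (m : Fin q) :
    cov4 (wMet gbar gtil (fun _ => (1:ℝ))) (wMetInv gbinv gtinv (fun _ => (1:ℝ)))
      (Riem (wMet gbar gtil (fun _ => (1:ℝ))) (wMetInv gbinv gtinv (fun _ => (1:ℝ))))
      z (Fin.castAdd q i) (Fin.castAdd q j) (Fin.castAdd q s) (Fin.castAdd q l) (Fin.natAdd p m) = 0 := by
  unfold cov4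
  simp only [Fin.sum_univ_add, met_cc, met_cn, met_nc, met_nn, miv_cc, miv_cn, miv_nc, miv_nn, pdg_c, pdg_n, pdt_c, pdt_n, pdZ, one_mul, mul_one, mul_zero, zero_mul, add_zero, zero_add, sub_zero, zero_sub, neg_zero, sub_self, Finset.sum_const_zero, chr_bbb, chr_bbf, chr_bfb, chr_bff, chr_fbb, chr_fbf, chr_ffb, chr_fff, pdcb_c, pdcb_n, pdct_c, pdct_n, riem_bbbb, riem_bbbf, riem_bbfb, riem_bbff, riem_bfbb, riem_bfbf, riem_bffb, riem_bfff, riem_fbbb, riem_fbbf, riem_fbfb, riem_fbff, riem_ffbb, riem_ffbf, riem_fffb, riem_ffff, pdrb_c, pdrb_n, pdrt_c, pdrt_n]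

lemma cov4_fb (z : Fin (p+q) → ℝ) (i j s l : Fin q) (m : Fin p) :
    cov4 (wMet gbar gtil (fun _ => (1:ℝ))) (wMetInv gbinv gtinv (fun _ => (1:ℝ)))
      (Riem (wMet gbar gtil (fun _ => (1:ℝ))) (wMetInv gbinv gtinv (fun _ => (1:ℝ))))
      z (Fin.natAdd p i) (Fin.natAdd p j) (Fin.natAdd p s) (Fin.natAdd p l) (Fin.castAdd q m) = 0 := by
  unfold cov4
  simp only [Fin.sum_univ_add, met_cc, met_cn, met_nc, met_nn, miv_cc, miv_cn, miv_nc, miv_nn, pdg_c, pdg_n, pdt_c, pdt_n, pdZ, one_mul, mul_one, mul_zero, zero_mul, add_zero, zero_add, sub_zero, zero_sub, neg_zero, sub_self, Finset.sum_const_zero, chr_bbb, chr_bbf, chr_bfb, chr_bff, chr_fbb, chr_fbf, chr_ffb, chr_fff, pdcb_c, pdcb_n, pdct_c, pdct_n, riem_bbbb, riem_bbbf, riem_bbfb, riem_bbff, riem_bfbb, riem_bfbf, riem_bffb, riem_bfff, riem_fbbb, riem_fbbf, riem_fbfb, riem_fbff, riem_ffbb, riem_ffbf, riem_fffb, riem_ffff,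 pdrb_c, pdrb_n, pdrt_c, pdrt_n]

lemma cov4_ff (z : Fin (p+q) → ℝ) (i j s l : Fin q) (m : Fin q) :
    cov4 (wMet gbar gtil (fun _ => (1:ℝ))) (wMetInv gbinv gtinv (fun _ => (1:ℝ)))
      (Riem (wMet gbar gtil (fun _ => (1:ℝ))) (wMetInv gbinv gtinv (fun _ => (1:ℝ))))
      z (Fin.natAdd p i) (Fin.natAdd p j) (Fin.natAdd p s) (Fin.natAdd p l) (Fin.natAdd p m) = cov4 gtil gtinv (Riem gtil gtinv) (fpt z) i j s l m := by
  unfold cov4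
  simp only [Fin.sum_univ_add, met_cc, met_cn, met_nc, met_nn, miv_cc, miv_cn, miv_nc, miv_nn, pdg_c, pdg_n, pdt_c, pdt_n, pdZ, one_mul, mul_one, mul_zero, zero_mul, add_zero, zero_add, sub_zero, zero_sub, neg_zero, sub_self, Finset.sum_const_zero, chr_bbb, chr_bbf, chr_bfb, chr_bff, chr_fbb, chr_fbf, chr_ffb, chr_fff, pdcb_c, pdcb_n, pdct_c, pdct_n, riem_bbbb, riem_bbbf, riem_bbfb, riem_bbff, riem_bfbb, riem_bfbf, riem_bffb, riem_bfff, riem_fbbb, riem_fbbf, riem_fbfb, riem_fbff, riem_ffbb, riem_ffbf, riem_fffb, riem_ffff, pdrb_c, pdrb_n, pdrt_c, pdrt_n]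

end Main

/-- Corollary 4.6: characterization of product (decomposable) recurrent manifolds. -/
theorem product_recurrent_iff
    {p q : ℕ} (hp : 1 ≤ p) (hq : 1 ≤ q)
    (U : Set (Fin p → ℝ)) (V : Set (Fin q → ℝ))
    (hU : IsOpen U) (hV : IsOpen V)
    (gbar gbinv : (Fin p → ℝ) → Fin p → Fin p → ℝ)
    (gtil gtinv : (Fin q → ℝ) → Fin q → Fin q → ℝ)
    (hgb : ∀ a b, ContDiffOn ℝ (⊤ : ℕ∞) (fun x => gbar x a b) U)
    (hgbs : ∀ x ∈ U, ∀ a b, gbar x a b = gbar x b a)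
    (hgbi : ∀ x ∈ U, ∀ a b, (∑ c, gbar x a c * gbinv x c b) = if a = b then (1 : ℝ) else 0)
    (hgt : ∀ a b, ContDiffOn ℝ (⊤ : ℕ∞) (fun y => gtil y a b) V)
    (hgts : ∀ y ∈ V, ∀ a b, gtil y a b = gtil y b a)
    (hgti : ∀ y ∈ V, ∀ a b, (∑ c, gtil y a c * gtinv y c b) = if a = b then (1 : ℝ) else 0)
    (piF : (Fin (p + q) → ℝ) → Fin (p + q) → ℝ)
    (hpiF : ∀ m, ContDiffOn ℝ (⊤ : ℕ∞) (fun z => piF z m) (Mset U V)) :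
    (∀ z ∈ Mset U V,
        Recur (wMet gbar gtil (fun _ => (1 : ℝ))) (wMetInv gbinv gtinv (fun _ => (1 : ℝ))) piF z) ↔
      (∀ z ∈ Mset U V, ∀ (a b c d e : Fin p) (α β γ δ ε : Fin q),
        (cov4 gbar gbinv (Riem gbar gbinv) (bpt z) a b c d e = piF z (Fin.castAdd q e) * Riem gbar gbinv (bpt z) a b c d)
        ∧ (piF z (Fin.natAdd p ε) * Riem gbar gbinv (bpt z) a b c d = 0)
        ∧ (piF z (Fin.castAdd q e) * Riem gtil gtinv (fpt z) α β γ δ = 0)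
        ∧ (cov4 gtil gtinv (Riem gtil gtinv) (fpt z) α β γ δ ε = piF z (Fin.natAdd p ε) * Riem gtil gtinv (fpt z) α β γ δ)) := by
  constructor
  · intro hR z hz a b c d e α β γ δ ε
    refine ⟨?_, ?_, ?_, ?_⟩
    · have h1 := hR z hz (Fin.castAdd q a) (Fin.castAdd q b) (Fin.castAdd q c)
        (Fin.castAdd q d) (Fin.castAdd q e)
      rwa [cov4_bb, riem_bbbb] at h1
    · have h2 := hR z hz (Fin.castAdd q a) (Fin.castAdd q b) (Fin.castAdd q c)
        (Fin.castAdd q d) (Fin.natAdd p ε)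
      rw [cov4_bf, riem_bbbb] at h2
      exact h2.symm
    · have h3 := hR z hz (Fin.natAdd p α) (Fin.natAdd p β) (Fin.natAdd p γ)
        (Fin.natAdd p δ) (Fin.castAdd q e)
      rw [cov4_fb, riem_ffff] at h3
      exact h3.symm
    · have h4 := hR z hz (Fin.natAdd p α) (Fin.natAdd p β) (Fin.natAdd p γ)
        (Fin.natAdd p δ) (Fin.natAdd p ε)
      rwa [cov4_ff, riem_ffff] at h4
  · intro hC z hz i j s l m
    have a0 : Fin p := ⟨0, hp⟩
    have α0 : Fin q := ⟨0, hq⟩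
    induction i using Fin.addCases <;> induction j using Fin.addCases <;>
      induction s using Fin.addCases <;> induction l using Fin.addCases <;>
      induction m using Fin.addCases <;>
    first
      | (rw [cov4_bb, riem_bbbb]; exact (hC z hz _ _ _ _ _ α0 α0 α0 α0 α0).1)
      | (rw [cov4_bf, riem_bbbb]; exact ((hC z hz _ _ _ _ a0 α0 α0 α0 α0 _).2.1).symm)
      | (rw [cov4_fb, riem_ffff]; exact ((hC z hz a0 a0 a0 a0 _ _ _ _ _ α0).2.2.1).symm)
      | (rw [cov4_ff, riem_ffff]; exact (hC z hz a0 a0 a0 a0 a0 _ _ _ _ _).2.2.2)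
      | (simp only [cov4, Fin.sum_univ_add, met_cc, met_cn, met_nc, met_nn, miv_cc, miv_cn, miv_nc, miv_nn, pdg_c, pdg_n, pdt_c, pdt_n, pdZ, one_mul, mul_one, mul_zero, zero_mul, add_zero, zero_add, sub_zero, zero_sub, neg_zero, sub_self, Finset.sum_const_zero, chr_bbb, chr_bbf, chr_bfb, chr_bff, chr_fbb, chr_fbf, chr_ffb, chr_fff, pdcb_c, pdcb_n, pdct_c, pdct_n, riem_bbbb, riem_bbbf, riem_bbfb, riem_bbff, riem_bfbb, riem_bfbf, riem_bffb, riem_bfff, riem_fbbb, riem_fbbf, riem_fbfb, riem_fbff, riem_ffbb, riem_ffbf, riem_fffb, riem_ffff, pdrb_c, pdrb_n, pdrt_c, pdrt_n, mul_zero])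
end
end
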